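/- arXiv:1710.00788 — 14 statements merged into one kernel-verified Lean document; each statement's English description precedes it below -/
import Mathlib

section
/- Let R be a commutative ring, n a natural number, X an n×n matrix over R, and s, t ∈ R. For any ℓ with 0 ≤ ℓ ≤ n and any two subsets I, J of {1,…,n} each of cardinality ℓ, the permanent of the ℓ×ℓ submatrix of sI + tX with rows indexed by I and columns indexed by J equals the sum over j = 0,…,ℓ of s^{ℓ-j} t^j times the sum, over all subsets A of I ∩ J with |A| = ℓ - j, of the permanent of the submatrix of X with rows indexed by I \ A and columns indexed by J \ A. -/
/-- The permanent of a square matrix: `per(M) = Σ_{σ} Π_i M_{i, σ(i)}`. -/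
def permanent {α : Type*} [Fintype α] [DecidableEq α] {R : Type*} [CommSemiring R]
    (M : Matrix α α R) : R :=
  ∑ σ : Equiv.Perm α, ∏ i, M i (σ i)

/-- The permanent of the submatrix of `M` with rows indexed by `I` and columns indexed
by `J` (for `|I| = |J|`); expressed as a sum over bijections `I ≃ J`, which agrees with
the permanent of the submatrix with rows and columns taken in increasing order. -/
def permOn {n : ℕ} {R : Type*} [CommSemiring R] (M : Matrix (Fin n) (Fin n) R)
    (I J : Finset (Fin n)) : R :=
  ∑ e : {i // i ∈ I} ≃ {j // j ∈ J}, ∏ i : {i // i ∈ I}, M i.1 (e i).1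

/-! Expand each product `∏ᵢ (s δ_{i, e i} + t X_{i, e i})` over the set `A ⊆ I` of rows that
take the diagonal term: a bijection `e : I ≃ J` then contributes
`s^|A| t^|I \ A| ∏_{i ∉ A} X_{i, e i}` if it fixes `A` pointwise (which forces `A ⊆ I ∩ J`)
and nothing otherwise. Bijections `I ≃ J` fixing `A` pointwise are the bijections
`I \ A ≃ J \ A`, so summing over `e` turns the `A`-term into
`s^|A| t^|I \ A| per(X[I \ A, J \ A])`; grouping the `A` by size gives the formula. -/

open Finset

lemma Finset.sum_powerset_eq_sum_range_of_card_le {α M : Type*} [AddCommMonoid M]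
    {s : Finset α} {m : ℕ} (h : #s ≤ m) (f : Finset α → M) :
    ∑ t ∈ s.powerset, f t = ∑ k ∈ range (m + 1), ∑ t ∈ s.powersetCard k, f t := by
  rw [sum_powerset]
  refine sum_subset (range_subset_range.2 (by omega)) fun k _ hk => ?_
  rw [powersetCard_eq_empty.2 (by rw [mem_range] at hk; omega), sum_empty]

namespace Equiv

variable {ι : Type*} [DecidableEq ι] {S T : Finset ι}

def extendById (e : S ≃ T) (x : ι) : ι := if h : x ∈ S then e ⟨x, h⟩ else x

@[simp]
lemma extendById_coe (e : S ≃ T) (x : S) : e.extendById x = e x := by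
  simp [extendById]

lemma extendById_of_notMem (e : S ≃ T) {x : ι} (hx : x ∉ S) : e.extendById x = x :=
  dif_neg hx

lemma extendById_mem (e : S ≃ T) {x : ι} (hx : x ∈ S) : e.extendById x ∈ T := by
  lift x to S using hx
  simp

lemma symm_extendById_extendById (e : S ≃ T) {x : ι} (hx : x ∈ S) :
    e.symm.extendById (e.extendById x) = x := by
  lift x to S using hx
  simp

lemma extendById_injOn (e : S ≃ T) : Set.InjOn e.extendById S :=
  Set.LeftInvOn.injOn fun _ hx => e.symm_extendById_extendById hx

lemma extendById_symm_extendById (e : S ≃ T) {y : ι} (hy : y ∈ T) :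
    e.extendById (e.symm.extendById y) = y := by
  simpa using e.symm.symm_extendById_extendById hy

def FixesPointwise (e : S ≃ T) (A : Finset ι) : Prop := ∀ a ∈ A, e.extendById a = a

instance (e : S ≃ T) (A : Finset ι) : Decidable (e.FixesPointwise A) := decidableDforallFinset

variable {I J A : Finset ι}

lemma FixesPointwise.subset {e : I ≃ J} (hfix : e.FixesPointwise A) (hAI : A ⊆ I) :
    A ⊆ J := fun a ha =>
  hfix a ha ▸ e.extendById_mem (hAI ha)

lemma FixesPointwise.symm {e : I ≃ J} (hfix : e.FixesPointwise A) (hAI : A ⊆ I) :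
    e.symm.FixesPointwise A := fun a ha => by
  conv_lhs => rw [← hfix a ha]
  exact e.symm_extendById_extendById (hAI ha)

lemma extendById_mem_sdiff (e : I ≃ J) (hAI : A ⊆ I) (hfix : e.FixesPointwise A)
    {x : ι} (hx : x ∈ I \ A) : e.extendById x ∈ J \ A := by
  rw [mem_sdiff] at hx ⊢
  refine ⟨e.extendById_mem hx.1, fun hxA => hx.2 ?_⟩
  have hx_fixed : e.extendById x = x :=
    e.extendById_injOn (hAI hxA) hx.1 (hfix _ hxA)
  exact hx_fixed ▸ hxA

def restrictSdiff (e : I ≃ J) (hAI : A ⊆ I) (hfix : e.FixesPointwise A) :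
    ↥(I \ A) ≃ ↥(J \ A) where
  toFun x := ⟨e.extendById x, e.extendById_mem_sdiff hAI hfix x.2⟩
  invFun y := ⟨e.symm.extendById y, e.symm.extendById_mem_sdiff
    (hfix.subset hAI) (hfix.symm hAI) y.2⟩
  left_inv x := Subtype.ext <| e.symm_extendById_extendById (mem_sdiff.1 x.2).1
  right_inv y := Subtype.ext <| e.extendById_symm_extendById (mem_sdiff.1 y.2).1

@[simp]
lemma coe_restrictSdiff_apply (e : I ≃ J) (hAI : A ⊆ I) (hfix : e.FixesPointwise A)
    (x : ↥(I \ A)) : (e.restrictSdiff hAI hfix x : ι) = e.extendById x := rfl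

lemma extendById_mem_of_sdiff (f : ↥(I \ A) ≃ ↥(J \ A)) (hAJ : A ⊆ J) {x : ι}
    (hx : x ∈ I) : f.extendById x ∈ J := by
  by_cases hxA : x ∈ A
  · rw [f.extendById_of_notMem fun h => (mem_sdiff.1 h).2 hxA]
    exact hAJ hxA
  · exact (mem_sdiff.1 (f.extendById_mem (mem_sdiff.2 ⟨hx, hxA⟩))).1

lemma extendById_eq_self_of_mem (f : ↥(I \ A) ≃ ↥(J \ A)) {x : ι} (hx : x ∈ A) :
    f.extendById x = x :=
  f.extendById_of_notMem fun h => (mem_sdiff.1 h).2 hx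

lemma symm_extendById_extendById_of_mem (f : ↥(I \ A) ≃ ↥(J \ A)) {x : ι} (hx : x ∈ I) :
    f.symm.extendById (f.extendById x) = x := by
  by_cases hxA : x ∈ A
  · rw [f.extendById_eq_self_of_mem hxA, f.symm.extendById_eq_self_of_mem hxA]
  · exact f.symm_extendById_extendById (mem_sdiff.2 ⟨hx, hxA⟩)

def extendSdiff (f : ↥(I \ A) ≃ ↥(J \ A)) (hAI : A ⊆ I) (hAJ : A ⊆ J) : I ≃ J where
  toFun x := ⟨f.extendById x, f.extendById_mem_of_sdiff hAJ x.2⟩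
  invFun y := ⟨f.symm.extendById y, f.symm.extendById_mem_of_sdiff hAI y.2⟩
  left_inv x := Subtype.ext <| f.symm_extendById_extendById_of_mem x.2
  right_inv y := Subtype.ext <| by simpa using f.symm.symm_extendById_extendById_of_mem y.2

lemma extendById_extendSdiff (f : ↥(I \ A) ≃ ↥(J \ A)) (hAI : A ⊆ I) (hAJ : A ⊆ J)
    {x : ι} (hx : x ∈ I) : (f.extendSdiff hAI hAJ).extendById x = f.extendById x := by
  lift x to I using hx
  simp [extendSdiff]

def fixingEquiv (hAI : A ⊆ I) (hAJ : A ⊆ J) :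
    {e : I ≃ J // e.FixesPointwise A} ≃ (↥(I \ A) ≃ ↥(J \ A)) where
  toFun e := e.1.restrictSdiff hAI e.2
  invFun f := ⟨f.extendSdiff hAI hAJ, fun a ha => by
    rw [f.extendById_extendSdiff hAI hAJ (hAI ha), f.extendById_eq_self_of_mem ha]⟩
  left_inv := by
    rintro ⟨e, hfix⟩
    refine Subtype.ext <| Equiv.ext fun x => Subtype.ext ?_
    change (e.restrictSdiff hAI hfix).extendById x = e x
    by_cases hxA : x.1 ∈ A
    · rw [extendById_eq_self_of_mem _ hxA, ← extendById_coe, hfix _ hxA]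
    · have hx : x.1 ∈ I \ A := mem_sdiff.2 ⟨x.2, hxA⟩
      simpa using (e.restrictSdiff hAI hfix).extendById_coe ⟨x, hx⟩
  right_inv f := Equiv.ext fun x => Subtype.ext <| by
    simp [f.extendById_extendSdiff hAI hAJ (mem_sdiff.1 x.2).1]

end Equiv

lemma sum_extendById_prod_sdiff_eq_permOn {n : ℕ} {R : Type*} [CommSemiring R]
    (X : Matrix (Fin n) (Fin n) R) {I J A : Finset (Fin n)} (hAI : A ⊆ I) (hAJ : A ⊆ J) :
    ∑ e : I ≃ J with e.FixesPointwise A, ∏ i ∈ I \ A, X i (e.extendById i) =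
      permOn X (I \ A) (J \ A) := by
  rw [sum_subtype (p := fun e : I ≃ J => e.FixesPointwise A) _ (by simp)]
  refine Fintype.sum_equiv (Equiv.fixingEquiv hAI hAJ) _ _ fun e => ?_
  rw [← prod_coe_sort]
  rfl

lemma prod_smul_one_add_smul_apply {ι R : Type*} [DecidableEq ι] [CommSemiring R]
    (X : Matrix ι ι R) (s t : R) {I J : Finset ι} (e : I ≃ J) :
    ∏ i : I, (s • (1 : Matrix ι ι R) + t • X) i (e i) =
      ∑ A ∈ I.powerset, s ^ #A * t ^ #(I \ A) *
        if e.FixesPointwise A then ∏ i ∈ I \ A, X i (e.extendById i) else 0 := by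
  calc ∏ i : I, (s • (1 : Matrix ι ι R) + t • X) i (e i)
      = ∏ i ∈ I, ((s * if e.extendById i = i then 1 else 0) + t * X i (e.extendById i)) := by
        rw [← prod_coe_sort I]
        refine prod_congr rfl fun i _ => ?_
        simp [Matrix.one_apply, eq_comm]
    _ = _ := by
        rw [prod_add]
        refine sum_congr rfl fun A _ => ?_
        have hdiag : ∏ i ∈ A, (s * if e.extendById i = i then 1 else 0) =
            s ^ #A * if e.FixesPointwise A then 1 else 0 := by
          rw [prod_mul_distrib, prod_const, prod_boole]
          rfl -- the condition produced by `prod_boole` is `FixesPointwise` unfolded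
        rw [hdiag, prod_mul_distrib, prod_const]
        split_ifs <;> ring

theorem permOn_smul_one_add_smul {n : ℕ} {R : Type*} [CommSemiring R]
    (X : Matrix (Fin n) (Fin n) R) (s t : R) (I J : Finset (Fin n)) :
    permOn (s • (1 : Matrix (Fin n) (Fin n) R) + t • X) I J =
      ∑ A ∈ (I ∩ J).powerset, s ^ #A * t ^ #(I \ A) * permOn X (I \ A) (J \ A) := by
  calc permOn (s • (1 : Matrix (Fin n) (Fin n) R) + t • X) I J
      = ∑ A ∈ I.powerset, s ^ #A * t ^ #(I \ A) * ∑ e : I ≃ J,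
          if e.FixesPointwise A then ∏ i ∈ I \ A, X i (e.extendById i) else 0 := by
        simp only [permOn, prod_smul_one_add_smul_apply, mul_sum]
        rw [sum_comm]
    _ = ∑ A ∈ (I ∩ J).powerset, s ^ #A * t ^ #(I \ A) * ∑ e : I ≃ J,
          if e.FixesPointwise A then ∏ i ∈ I \ A, X i (e.extendById i) else 0 := by
        refine (sum_subset (powerset_mono.2 inter_subset_left) fun A hAI hAIJ => ?_).symm
        rw [mem_powerset] at hAI hAIJ
        rw [sum_eq_zero fun e _ => if_neg fun hfix => hAIJ (subset_inter hAI (hfix.subset hAI)),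
          mul_zero]
    _ = _ := by
        refine sum_congr rfl fun A hA => ?_
        rw [mem_powerset, subset_inter_iff] at hA
        rw [← sum_filter, sum_extendById_prod_sdiff_eq_permOn X hA.1 hA.2]

theorem stmt0_general {R : Type*} [CommRing R] (n : ℕ) (X : Matrix (Fin n) (Fin n) R)
    (s t : R) (ℓ : ℕ) (I J : Finset (Fin n))
    (hI : I.card = ℓ) :
    permOn (s • (1 : Matrix (Fin n) (Fin n) R) + t • X) I J =
      ∑ j ∈ Finset.range (ℓ + 1), s ^ (ℓ - j) * t ^ j *
        ∑ A ∈ (I ∩ J).powersetCard (ℓ - j), permOn X (I \ A) (J \ A) := by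
  have hIJ : #(I ∩ J) ≤ ℓ := hI ▸ card_le_card inter_subset_left
  rw [permOn_smul_one_add_smul, sum_powerset_eq_sum_range_of_card_le hIJ, ← sum_range_reflect]
  refine sum_congr rfl fun j hj => ?_
  have hjℓ : j ≤ ℓ := Nat.lt_succ_iff.1 (mem_range.1 hj)
  rw [show ℓ + 1 - 1 - j = ℓ - j by omega, mul_sum]
  refine sum_congr rfl fun A hA => ?_
  obtain ⟨hA, hcard⟩ := mem_powersetCard.1 hA
  rw [card_sdiff_of_subset (hA.trans inter_subset_left), hI, hcard, Nat.sub_sub_self hjℓ]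

theorem stmt0 {R : Type*} [CommRing R] (n : ℕ) (X : Matrix (Fin n) (Fin n) R)
    (s t : R) (ℓ : ℕ) (hℓ : ℓ ≤ n) (I J : Finset (Fin n))
    (hI : I.card = ℓ) (hJ : J.card = ℓ) :
    permOn (s • (1 : Matrix (Fin n) (Fin n) R) + t • X) I J =
      ∑ j ∈ Finset.range (ℓ + 1), s ^ (ℓ - j) * t ^ j *
        ∑ A ∈ (I ∩ J).powersetCard (ℓ - j), permOn X (I \ A) (J \ A) :=
  stmt0_general n X s t ℓ I J hI
end

section
/- Let R be a commutative ring, n a natural number, X an n×n matrix over R, and s, t ∈ R. Then per(sI + tX) = Σ_{j=0}^{n} s^{n-j} t^j · Σ_{A ⊆ {1,…,n}, |A| = j} per(X_{AA}), where X_{AA} is the principal submatrix of X with rows and columns indexed by A. (Equivalently, per(sI + tX) = Σ_j s^{n-j} t^j tr X^{∨j}, where tr X^{∨j} is the sum of the permanents of all j×j principal submatrices of X.) -/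
open Finset

theorem permanent_add {α : Type*} [Fintype α] [DecidableEq α] {R : Type*} [CommSemiring R]
    (M N : Matrix α α R) :
    permanent (M + N) = ∑ A : Finset α, ∑ σ : Equiv.Perm α,
      (∏ i ∈ A, N i (σ i)) * ∏ i ∈ Aᶜ, M i (σ i) := by
  simp only [permanent, Matrix.add_apply, add_comm (M _ _), Fintype.prod_add]
  exact sum_comm

lemma prod_compl_smul_one_apply {α : Type*} [Fintype α] [DecidableEq α] {R : Type*}
    [CommSemiring R] (s : R) (A : Finset α) (σ : Equiv.Perm α) :
    ∏ i ∈ Aᶜ, (s • (1 : Matrix α α R)) i (σ i) =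
      if ∀ i ∉ A, σ i = i then s ^ (Fintype.card α - #A) else 0 := by
  simp only [Matrix.smul_apply, Matrix.one_apply, smul_eq_mul, mul_ite, mul_one, mul_zero,
    prod_ite_zero]
  simp [eq_comm, card_compl]

lemma sum_perm_fixing_compl_eq_permOn {n : ℕ} {R : Type*} [CommSemiring R]
    (X : Matrix (Fin n) (Fin n) R) (A : Finset (Fin n)) :
    ∑ σ : Equiv.Perm (Fin n) with ∀ i ∉ A, σ i = i, ∏ i ∈ A, X i (σ i) = permOn X A A := by
  rw [sum_subtype (p := fun σ : Equiv.Perm (Fin n) => ∀ i ∉ A, σ i = i) _ (by simp)]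
  refine Fintype.sum_equiv (Equiv.Perm.subtypeEquivSubtypePerm (· ∈ A)).symm _ _ fun σ => ?_
  rw [prod_subtype A (fun _ => Iff.rfl)]
  rfl

theorem permanent_smul_one_add {n : ℕ} {R : Type*} [CommSemiring R] (s : R)
    (X : Matrix (Fin n) (Fin n) R) :
    permanent (s • (1 : Matrix (Fin n) (Fin n) R) + X) =
      ∑ A : Finset (Fin n), s ^ (n - #A) * permOn X A A := by
  rw [permanent_add]
  refine sum_congr rfl fun A _ => ?_
  simp only [prod_compl_smul_one_apply, mul_ite, mul_zero, ← sum_filter, ← sum_mul,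
    sum_perm_fixing_compl_eq_permOn, Fintype.card_fin]
  ring

lemma permOn_smul {n : ℕ} {R : Type*} [CommSemiring R] (t : R) (X : Matrix (Fin n) (Fin n) R)
    (I J : Finset (Fin n)) : permOn (t • X) I J = t ^ #I * permOn X I J := by
  simp [permOn, prod_mul_distrib, mul_sum]

/-- `per(sI + tX) = Σ_{j=0}^{n} s^{n-j} t^j · Σ_{|A| = j} per(X_{AA})`, i.e. the trace
formula `per(sI + tX) = Σ_j s^{n-j} t^j tr X^{∨j}`. -/
theorem stmt1 {R : Type*} [CommRing R] (n : ℕ) (X : Matrix (Fin n) (Fin n) R)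
    (s t : R) :
    permanent (s • (1 : Matrix (Fin n) (Fin n) R) + t • X) =
      ∑ j ∈ Finset.range (n + 1), s ^ (n - j) * t ^ j *
        ∑ A ∈ Finset.powersetCard j (Finset.univ : Finset (Fin n)), permOn X A A := by
  rw [permanent_smul_one_add, ← powerset_univ, sum_powerset, card_univ, Fintype.card_fin]
  refine sum_congr rfl fun j _ => ?_
  rw [mul_sum]
  refine sum_congr rfl fun A hA => ?_
  rw [permOn_smul, (mem_powersetCard.mp hA).2]
  ring
end

section
/- Let σ be a permutation of {1,…,n}, let P_σ be its n×n permutation matrix (with (P_σ)_{ij} = 1 if σ(i) = j and 0 otherwise), and let t be an element of a commutative ring. Then per(I + t·P_σ) = Π_{ℓ=1}^{n} (1 + t^ℓ)^{n_σ(ℓ)}, where n_σ(ℓ) is the number of cycles of length ℓ in the cycle decomposition of σ (fixed points counting as cycles of length 1). -/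
/-- The permutation matrix of `σ`: `(P_σ)_{ij} = 1` if `σ(i) = j`, else `0`. -/
def permMatrix {n : ℕ} (R : Type*) [CommRing R] (σ : Equiv.Perm (Fin n)) :
    Matrix (Fin n) (Fin n) R :=
  Matrix.of fun i j => if σ i = j then 1 else 0

open Finset

theorem Finset.sum_image_biUnion_powerset_pow_card {α R : Type*} [DecidableEq α] [CommSemiring R]
    (P : Finset (Finset α)) (hdisj : (P : Set (Finset α)).PairwiseDisjoint id) (hne : ∅ ∉ P)
    (t : R) :
    ∑ S ∈ P.powerset.image (·.biUnion id), t ^ #S = ∏ B ∈ P, (1 + t ^ #B) := by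
  have hsub : ∀ T₁ ⊆ P, ∀ T₂ ⊆ P, T₁.biUnion id = T₂.biUnion id → T₁ ⊆ T₂ := by
    intro T₁ h₁ T₂ h₂ h B hB
    obtain ⟨x, hx⟩ := nonempty_iff_ne_empty.2 (ne_of_mem_of_not_mem (h₁ hB) hne)
    obtain ⟨B', hB', hxB'⟩ := mem_biUnion.1 (h ▸ mem_biUnion.2 ⟨B, hB, hx⟩)
    rwa [hdisj.elim_finset (h₁ hB) (h₂ hB') x hx hxB']
  have hinj : Set.InjOn (·.biUnion id) (P.powerset : Set (Finset (Finset α))) := by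
    intro T₁ h₁ T₂ h₂ h
    rw [mem_coe, mem_powerset] at h₁ h₂
    exact (hsub T₁ h₁ T₂ h₂ h).antisymm (hsub T₂ h₂ T₁ h₁ h.symm)
  rw [sum_image hinj, prod_one_add]
  refine sum_congr rfl fun T hT => ?_
  rw [card_biUnion (hdisj.subset (mem_powerset.1 hT)), prod_pow_eq_pow_sum]
  rfl

namespace Equiv.Perm

variable {α : Type*} [Fintype α] [DecidableEq α] (σ : Perm α)

def orbitFinset (i : α) : Finset α := {j | σ.SameCycle i j}

def orbitFinsets : Finset (Finset α) := univ.image σ.orbitFinset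

def invariantFinsets : Finset (Finset α) := {S | ∀ i ∈ S, σ i ∈ S}

variable {σ}

theorem mem_orbitFinset {i j : α} : j ∈ σ.orbitFinset i ↔ σ.SameCycle i j := by
  simp [orbitFinset]

theorem mem_invariantFinsets {S : Finset α} : S ∈ σ.invariantFinsets ↔ ∀ i ∈ S, σ i ∈ S := by
  simp [invariantFinsets]

theorem orbitFinset_eq_of_sameCycle {i j : α} (h : σ.SameCycle i j) :
    σ.orbitFinset i = σ.orbitFinset j := by
  ext k
  simp only [mem_orbitFinset]
  exact ⟨h.symm.trans, h.trans⟩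

theorem orbitFinset_subset_of_mem_invariantFinsets {S : Finset α} (hS : S ∈ σ.invariantFinsets)
    {i : α} (hi : i ∈ S) : σ.orbitFinset i ⊆ S := by
  intro j hj
  obtain ⟨k, -, -, rfl⟩ := (mem_orbitFinset.1 hj).exists_pow_eq
  rw [coe_pow]
  exact (Set.MapsTo.iterate (mem_invariantFinsets.1 hS) k) hi

theorem orbitFinset_eq_singleton {i : α} (hi : σ i = i) : σ.orbitFinset i = {i} := by
  ext j
  rw [mem_orbitFinset, mem_singleton]
  exact ⟨fun h => (h.eq_of_left hi).symm, fun h => h ▸ SameCycle.refl σ i⟩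

theorem orbitFinset_eq_support_cycleOf {i : α} (hi : i ∈ σ.support) :
    σ.orbitFinset i = (σ.cycleOf i).support := by
  ext j
  rw [mem_orbitFinset, mem_support_cycleOf_iff, and_iff_left hi]

variable (σ)

theorem pairwiseDisjoint_orbitFinsets : (σ.orbitFinsets : Set (Finset α)).PairwiseDisjoint id := by
  simp only [orbitFinsets, coe_image, coe_univ, Set.image_univ]
  rintro _ ⟨i, rfl⟩ _ ⟨j, rfl⟩ hne
  refine disjoint_left.2 fun k hi hj => hne ?_
  rw [id, mem_orbitFinset] at hi hj
  exact orbitFinset_eq_of_sameCycle (hi.trans hj.symm)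

theorem empty_notMem_orbitFinsets : ∅ ∉ σ.orbitFinsets := by
  simp only [orbitFinsets, mem_image, mem_univ, true_and, not_exists]
  exact fun i h => (eq_empty_iff_forall_notMem.1 h) i (mem_orbitFinset.2 (SameCycle.refl σ i))

theorem orbitFinset_mem_invariantFinsets (i : α) : σ.orbitFinset i ∈ σ.invariantFinsets :=
  mem_invariantFinsets.2 fun _ hj =>
    mem_orbitFinset.2 (sameCycle_apply_right.2 (mem_orbitFinset.1 hj))

theorem invariantFinsets_eq_image_biUnion :
    σ.invariantFinsets = σ.orbitFinsets.powerset.image (·.biUnion id) := by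
  ext S
  constructor
  · intro hS
    refine mem_image.2 ⟨σ.orbitFinsets.filter (· ⊆ S), mem_powerset.2 (filter_subset _ _), ?_⟩
    refine (biUnion_subset.2 fun B hB => (mem_filter.1 hB).2).antisymm fun i hi => ?_
    exact mem_biUnion.2 ⟨σ.orbitFinset i, mem_filter.2 ⟨mem_image_of_mem _ (mem_univ i),
      orbitFinset_subset_of_mem_invariantFinsets hS hi⟩, mem_orbitFinset.2 (SameCycle.refl σ i)⟩
  · intro hS
    obtain ⟨T, hT, rfl⟩ := mem_image.1 hS
    refine mem_invariantFinsets.2 fun i hi => ?_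
    obtain ⟨B, hB, hiB⟩ := mem_biUnion.1 hi
    obtain ⟨j, -, rfl⟩ := mem_image.1 (mem_powerset.1 hT hB)
    exact mem_biUnion.2 ⟨_, hB, mem_invariantFinsets.1 (σ.orbitFinset_mem_invariantFinsets j) i hiB⟩

theorem image_cycleOf_support : σ.support.image σ.cycleOf = σ.cycleFactorsFinset := by
  ext c
  rw [mem_image]
  constructor
  · rintro ⟨i, hi, rfl⟩
    exact cycleOf_mem_cycleFactorsFinset_iff.2 hi
  · intro hc
    obtain ⟨i, hi⟩ := (mem_cycleFactorsFinset_iff.1 hc).1.nonempty_support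
    exact ⟨i, mem_cycleFactorsFinset_support_le hc hi, (cycle_is_cycleOf hi hc).symm⟩

theorem injOn_support_cycleFactorsFinset :
    Set.InjOn support (σ.cycleFactorsFinset : Set (Perm α)) := by
  intro c hc d hd h
  obtain ⟨i, hi⟩ := (mem_cycleFactorsFinset_iff.1 hc).1.nonempty_support
  rw [cycle_is_cycleOf hi hc, cycle_is_cycleOf (h ▸ hi) hd]

theorem prod_orbitFinsets {M : Type*} [CommMonoid M] (f : ℕ → M) :
    ∏ B ∈ σ.orbitFinsets, f #B =
      f 1 ^ #(univ.filter fun i => σ i = i) * (σ.cycleType.map f).prod := by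
  set F := univ.filter fun i => σ i = i
  have hF : ∀ {i}, i ∈ F ↔ σ i = i := by simp [F]
  have hsplit : σ.orbitFinsets = F.image σ.orbitFinset ∪ σ.support.image σ.orbitFinset := by
    rw [orbitFinsets, ← image_union]
    congr 1
    ext i
    simp [hF, mem_support, em]
  have hdisj : _root_.Disjoint (F.image σ.orbitFinset) (σ.support.image σ.orbitFinset) := by
    simp only [disjoint_left, mem_image, not_exists, not_and]
    rintro _ ⟨i, hi, rfl⟩ j hj hij
    have hji : j ∈ σ.orbitFinset i := hij ▸ mem_orbitFinset.2 (SameCycle.refl σ j)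
    rw [orbitFinset_eq_singleton (hF.1 hi), mem_singleton] at hji
    exact mem_support.1 hj (hji ▸ hF.1 hi)
  have hfix : ∏ B ∈ F.image σ.orbitFinset, f #B = f 1 ^ #F := by
    rw [prod_image, prod_congr rfl fun i hi => by
      rw [orbitFinset_eq_singleton (hF.1 hi), card_singleton], prod_const]
    intro i hi j hj h
    simpa [orbitFinset_eq_singleton (hF.1 hi), orbitFinset_eq_singleton (hF.1 hj)] using h
  have hcyc : σ.support.image σ.orbitFinset = σ.cycleFactorsFinset.image support := by
    rw [← image_cycleOf_support, image_image]
    exact image_congr fun i hi => orbitFinset_eq_support_cycleOf hi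
  rw [hsplit, prod_union hdisj, hfix, hcyc, prod_image (injOn_support_cycleFactorsFinset σ),
    cycleType_def, Multiset.map_map]
  rfl

theorem sum_ite_coe_eq {M : Type*} [AddCommMonoid M] (f : α → α) (c : M) :
    ∑ τ : Perm α, (if ⇑τ = f then c else 0) = if Function.Bijective f then c else 0 := by
  split_ifs with hf
  · have hτ : ∀ τ : Perm α, ⇑τ = f ↔ τ = Equiv.ofBijective f hf := fun τ => by
      rw [← DFunLike.coe_fn_eq (F := Perm α), Equiv.coe_ofBijective]
    simp_rw [hτ]
    exact Fintype.sum_ite_eq' _ _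
  · exact sum_eq_zero fun τ _ => if_neg fun h : ⇑τ = f => hf (h ▸ τ.bijective)

theorem bijective_piecewise_id_iff (S : Finset α) :
    Function.Bijective (S.piecewise σ id) ↔ ∀ i ∈ S, σ i ∈ S := by
  rw [← Finite.injective_iff_bijective]
  constructor
  · intro h i hi
    by_contra hσi
    have : S.piecewise σ id (σ i) = S.piecewise σ id i := by
      rw [piecewise_eq_of_notMem _ _ _ hσi, piecewise_eq_of_mem _ _ _ hi, id]
    exact hσi (by rw [h this]; exact hi)
  · intro hS i j h
    by_cases hi : i ∈ S <;> by_cases hj : j ∈ S <;>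
      simp only [piecewise, hi, hj, if_true, if_false, id] at h
    · exact σ.injective h
    · exact absurd (h ▸ hS i hi) hj
    · exact absurd (h ▸ hS j hj) hi
    · exact h

variable {R : Type*} [CommSemiring R]

theorem prod_one_add_smul_permMatrix_apply (τ : Perm α) (t : R) :
    ∏ i, (1 + t • σ.permMatrix R) i (τ i) =
      ∑ S : Finset α, if ⇑τ = S.piecewise σ id then t ^ #S else 0 := by
  have hentry : ∀ i, (1 + t • σ.permMatrix R) i (τ i) =
      t * (if σ i = τ i then 1 else 0) + if i = τ i then 1 else 0 := fun i => by
    simp [Matrix.one_apply, add_comm]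
  simp_rw [hentry]
  rw [prod_add, powerset_univ]
  refine sum_congr rfl fun S _ => ?_
  rw [prod_mul_distrib, prod_const, prod_boole, prod_boole, mul_assoc, ite_zero_mul_ite_zero,
    mul_one, mul_boole]
  congr 1
  simp only [eq_iff_iff, funext_iff, piecewise, mem_sdiff, mem_univ, true_and, id]
  constructor
  · rintro ⟨hS, hSc⟩ i
    split_ifs with hi
    exacts [(hS i hi).symm, (hSc i hi).symm]
  · intro h
    exact ⟨fun i hi => by rw [h, if_pos hi], fun i hi => by rw [h, if_neg hi]⟩

theorem permanent_one_add_smul_permMatrix (t : R) :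
    permanent (1 + t • σ.permMatrix R) = ∑ S ∈ σ.invariantFinsets, t ^ #S := by
  simp_rw [permanent, σ.prod_one_add_smul_permMatrix_apply]
  rw [sum_comm, invariantFinsets, sum_filter]
  refine sum_congr rfl fun S _ => ?_
  rw [sum_ite_coe_eq]
  exact if_congr (σ.bijective_piecewise_id_iff S) rfl rfl

end Equiv.Perm

theorem permMatrix_eq_perm_permMatrix {n : ℕ} (R : Type*) [CommRing R] (σ : Equiv.Perm (Fin n)) :
    permMatrix R σ = σ.permMatrix R := by
  ext i j
  simp [permMatrix]

/-- `per(I + t·P_σ) = Π_ℓ (1 + t^ℓ)^{n_σ(ℓ)}`: the factor for fixed points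
(`ℓ = 1`) is `(1+t)^{#fixed points}`, and the cycles of length `≥ 2` are recorded by the
cycle type of `σ`. -/
theorem stmt2 {R : Type*} [CommRing R] (n : ℕ) (σ : Equiv.Perm (Fin n)) (t : R) :
    permanent ((1 : Matrix (Fin n) (Fin n) R) + t • permMatrix R σ) =
      (1 + t) ^ (Finset.univ.filter fun i => σ i = i).card *
        (σ.cycleType.map fun c => 1 + t ^ c).prod := by
  rw [permMatrix_eq_perm_permMatrix, σ.permanent_one_add_smul_permMatrix,
    σ.invariantFinsets_eq_image_biUnion,
    sum_image_biUnion_powerset_pow_card _ σ.pairwiseDisjoint_orbitFinsets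
      σ.empty_notMem_orbitFinsets,
    σ.prod_orbitFinsets (fun k => 1 + t ^ k), pow_one]
end

section
/- Let G be a (finite) subgroup of the symmetric group on {1,…,n}, and for σ ∈ G let P_σ denote its n×n permutation matrix. Then for every real t, (1/|G|) · Σ_{σ ∈ G} per(I + t·P_σ) = Σ_{ℓ=0}^{n} t^ℓ · N_ℓ, where N_ℓ is the number of orbits of the induced action of G on the ℓ-element subsets of {1,…,n}. -/
open Finset Equiv MulAction
open scoped Pointwise

namespace Equiv.Perm

variable {α : Type*} [DecidableEq α]

theorem exists_eqOn_and_fixes_compl_iff (σ : Perm α) (S : Finset α) :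
    (∃ τ : Perm α, (∀ i ∈ S, τ i = σ i) ∧ ∀ i ∉ S, τ i = i) ↔ S.image σ = S := by
  constructor
  · rintro ⟨τ, hS, hSc⟩
    refine eq_of_subset_of_card_le (image_subset_iff.mpr fun i hi => ?_)
      (card_image_of_injective _ σ.injective).ge
    by_contra h
    have : τ (σ i) = τ i := by rw [hSc _ h, hS i hi]
    exact h (by rwa [τ.injective this])
  · intro h
    have hσ : ∀ x, σ x ∈ S ↔ x ∈ S := fun x => by
      nth_rewrite 1 [← h]
      exact σ.injective.mem_finset_image
    exact ⟨ofSubtype (σ.subtypePerm hσ), fun i hi => ofSubtype_subtypePerm_of_mem hσ hi,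
      fun i hi => ofSubtype_subtypePerm_of_not_mem hσ hi⟩

variable [Fintype α] {R : Type*} [CommSemiring R]

theorem sum_prod_ite_mul_prod_ite_eq (σ : Perm α) (S : Finset α) (t : R) :
    ∑ τ : Perm α, (∏ i ∈ S, if σ i = τ i then t else 0) * ∏ i ∈ Sᶜ, (if i = τ i then 1 else 0) =
      if S.image σ = S then t ^ #S else 0 := by
  let P : Perm α → Prop := fun τ => (∀ i ∈ S, τ i = σ i) ∧ ∀ i ∉ S, τ i = i
  have summand : ∀ τ, (∏ i ∈ S, if σ i = τ i then t else 0) *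
      ∏ i ∈ Sᶜ, (if i = τ i then 1 else 0) = if P τ then t ^ #S else 0 := fun τ => by
    rw [prod_ite_zero, prod_boole, prod_const]
    simp only [ite_zero_mul_ite_zero, mul_one]
    refine if_congr ?_ rfl rfl
    simp only [P, mem_compl, eq_comm]
  simp only [summand]
  split_ifs with h
  · obtain ⟨τ₀, hS, hSc⟩ := (exists_eqOn_and_fixes_compl_iff σ S).mpr h
    have hP : ∀ τ, P τ ↔ τ = τ₀ := fun τ => by
      refine ⟨fun hτ => ext fun i => ?_, fun hτ => hτ ▸ ⟨hS, hSc⟩⟩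
      by_cases hi : i ∈ S
      · rw [hτ.1 i hi, hS i hi]
      · rw [hτ.2 i hi, hSc i hi]
    simp only [hP, sum_ite_eq', mem_univ, if_true]
  · exact sum_eq_zero fun τ _ => if_neg fun hτ => h
      ((exists_eqOn_and_fixes_compl_iff σ S).mp ⟨τ, hτ⟩)

end Equiv.Perm

theorem permanent_one_add_smul_permMatrix {n : ℕ} {R : Type*} [CommRing R]
    (σ : Perm (Fin n)) (t : R) :
    permanent (1 + t • permMatrix R σ) =
      ∑ S : Finset (Fin n), if S.image σ = S then t ^ #S else 0 := by
  have entry : ∀ (τ : Perm (Fin n)) i, (1 + t • permMatrix R σ) i (τ i) =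
      (if σ i = τ i then t else 0) + (if i = τ i then 1 else 0) := fun τ i => by
    simp [permMatrix, Matrix.one_apply, add_comm]
  simp only [permanent, entry, prod_add, powerset_univ, ← compl_eq_univ_sdiff]
  rw [sum_comm]
  exact sum_congr rfl fun S _ => Perm.sum_prod_ite_mul_prod_ite_eq σ S t

namespace SubMulAction

variable {G X : Type*} [Group G] [MulAction G X]

theorem card_orbitRel_quotient (p : SubMulAction G X) :
    Nat.card (orbitRel.Quotient G p) = Nat.card {O : Set X // ∃ x ∈ p, O = orbit G x} := by
  let f : orbitRel.Quotient G p → Set X := fun q => Subtype.val '' q.orbit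
  have hf : Function.Injective f :=
    (Set.image_injective.mpr Subtype.val_injective).comp orbitRel.Quotient.orbit_injective
  have hrange : Set.range f = {O | ∃ x ∈ p, O = orbit G x} := by
    ext O
    constructor
    · rintro ⟨q, rfl⟩
      induction q using Quotient.inductionOn' with
      | h x => exact ⟨x, x.2, val_image_orbit x⟩
    · rintro ⟨x, hx, rfl⟩
      exact ⟨Quotient.mk'' ⟨x, hx⟩, val_image_orbit _⟩
  rw [← Nat.card_range_of_injective hf, hrange]
  rfl

theorem sum_card_fixed_eq_card_orbits_mul_card_group [Fintype G] [Fintype X] [DecidableEq X]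
    (p : SubMulAction G X) [DecidablePred (· ∈ p)] :
    ∑ g : G, #{x | x ∈ p ∧ g • x = x} =
      Nat.card {O : Set X // ∃ x ∈ p, O = orbit G x} * Nat.card G := by
  classical
  have fixed : ∀ g : G, #{x | x ∈ p ∧ g • x = x} = Fintype.card (fixedBy p g) := fun g => by
    rw [← Nat.card_eq_fintype_card, ← Nat.card_image_of_injective Subtype.val_injective,
      ← Nat.card_eq_finsetCard]
    congr
    ext x
    simp [Subtype.ext_iff, and_comm]
  rw [← card_orbitRel_quotient]
  simp only [fixed, Nat.card_eq_fintype_card]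
  exact sum_card_fixedBy_eq_card_orbits_mul_card_group G p

end SubMulAction

theorem Set.powersetCard.mem_subMulAction_iff {G α : Type*} [Group G] [MulAction G α]
    [DecidableEq α] {n : ℕ} {S : Finset α} :
    S ∈ Set.powersetCard.subMulAction G α n ↔ #S = n :=
  Iff.rfl

theorem sum_sum_fixed_finset_pow_card {G α R : Type*} [Group G] [Fintype G] [MulAction G α]
    [Fintype α] [DecidableEq α] [CommSemiring R] (t : R) :
    ∑ g : G, ∑ S : Finset α, (if g • S = S then t ^ #S else 0) =
      Nat.card G * ∑ ℓ ∈ range (Fintype.card α + 1),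
        t ^ ℓ * Nat.card {O : Set (Finset α) // ∃ S : Finset α, #S = ℓ ∧ O = orbit G S} := by
  classical
  have card_mem : ∀ S : Finset α, #S ∈ range (Fintype.card α + 1) := fun S =>
    mem_range_succ_iff.mpr (card_le_univ S)
  have burnside : ∀ ℓ, ∑ g : G, #{S : Finset α | #S = ℓ ∧ g • S = S} =
      Nat.card {O : Set (Finset α) // ∃ S : Finset α, #S = ℓ ∧ O = orbit G S} * Nat.card G :=
    fun ℓ => by
      simpa only [Set.powersetCard.mem_subMulAction_iff] using
        SubMulAction.sum_card_fixed_eq_card_orbits_mul_card_group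
          (Set.powersetCard.subMulAction G α ℓ)
  calc ∑ g : G, ∑ S : Finset α, (if g • S = S then t ^ #S else 0)
      = ∑ g : G, ∑ ℓ ∈ range (Fintype.card α + 1),
          #{S : Finset α | #S = ℓ ∧ g • S = S} • t ^ ℓ := by
        refine sum_congr rfl fun g _ => ?_
        rw [← sum_filter, ← sum_fiberwise_of_maps_to' (fun S _ => card_mem S)]
        simp only [sum_const, filter_filter, and_comm]
    _ = _ := by
        rw [sum_comm, mul_sum]
        refine sum_congr rfl fun ℓ _ => ?_
        rw [← sum_smul, burnside, nsmul_eq_mul]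
        push_cast
        ring

theorem Subgroup.smul_finset_eq_image {α : Type*} [DecidableEq α] {G : Subgroup (Perm α)}
    (g : G) (S : Finset α) : g • S = S.image (g : Perm α) :=
  rfl

theorem Subgroup.orbit_finset_eq {α : Type*} [DecidableEq α] (G : Subgroup (Perm α))
    (S : Finset α) : orbit G S = {T | ∃ σ ∈ G, T = S.image σ} := by
  ext T
  constructor
  · rintro ⟨g, rfl⟩
    exact ⟨g, g.2, rfl⟩
  · rintro ⟨σ, hσ, rfl⟩
    exact ⟨⟨σ, hσ⟩, rfl⟩

/-- `(1/|G|) · Σ_{σ ∈ G} per(I + t·P_σ) = Σ_{ℓ=0}^{n} t^ℓ · N_ℓ`, where `N_ℓ` is the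
number of orbits of the induced action of `G` on the `ℓ`-element subsets of `{1,…,n}`
(an orbit being a set of the form `{T | ∃ σ ∈ G, T = σ·S}` for some `ℓ`-set `S`). -/
theorem stmt3 (n : ℕ) (G : Subgroup (Equiv.Perm (Fin n))) [Fintype G] (t : ℝ) :
    (1 / (Nat.card G : ℝ)) *
        ∑ σ : G, permanent ((1 : Matrix (Fin n) (Fin n) ℝ) +
          t • permMatrix ℝ (σ : Equiv.Perm (Fin n))) =
      ∑ ℓ ∈ Finset.range (n + 1), t ^ ℓ *
        (Nat.card {O : Set (Finset (Fin n)) //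
          ∃ S : Finset (Fin n), S.card = ℓ ∧
            O = {T | ∃ σ ∈ G, T = S.image (⇑σ)}} : ℝ) := by
  have hG : (Nat.card G : ℝ) ≠ 0 := Nat.cast_ne_zero.mpr Nat.card_pos.ne'
  simp only [permanent_one_add_smul_permMatrix, ← Subgroup.smul_finset_eq_image]
  rw [sum_sum_fixed_finset_pow_card, Fintype.card_fin, one_div, inv_mul_cancel_left₀ hG]
  simp only [Subgroup.orbit_finset_eq]
end

section
/- Let n be a natural number and s, t elements of a commutative ring. Let I be the n×n identity matrix and J the n×n all-ones matrix. Then per(sI + tJ) = Σ_{ℓ=0}^{n} (n!/(n-ℓ)!) · s^{n-ℓ} t^{ℓ}. -/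
open Finset Equiv Nat

section
variable {α : Type*} [Fintype α] [DecidableEq α]

theorem card_perm_fixing_pointwise (A : Finset α) :
    #{σ : Perm α | ∀ i ∈ A, σ i = i} = (Fintype.card α - #A)! := by
  have e : {σ : Perm α // ∀ i ∈ A, σ i = i} ≃ Perm {i : α // i ∉ A} :=
    (Equiv.subtypeEquivRight fun σ => by simp only [not_not]).trans
      (Perm.subtypeEquivSubtypePerm fun i => i ∉ A).symm
  rw [← Fintype.card_subtype, Fintype.card_congr e, Fintype.card_perm, Fintype.card_subtype,
    filter_not, filter_mem_eq_inter, univ_inter, card_univ_sdiff]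

variable {R : Type*} [CommSemiring R]

theorem prod_ite_eq_apply (σ : Perm α) (A : Finset α) (s : R) :
    ∏ i ∈ A, (if i = σ i then s else 0) = if ∀ i ∈ A, σ i = i then s ^ #A else 0 := by
  split_ifs with h
  · exact prod_eq_pow_card fun i hi => if_pos (h i hi).symm
  · push Not at h
    obtain ⟨i, hi, hσi⟩ := h
    exact prod_eq_zero hi (if_neg fun h => hσi h.symm)

theorem prod_smul_one_add_smul_ones_apply (σ : Perm α) (s t : R) :
    ∏ i, (s • 1 + t • Matrix.of fun _ _ => 1 : Matrix α α R) i (σ i) =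
      ∑ A ∈ (univ : Finset α).powerset,
        (if ∀ i ∈ A, σ i = i then s ^ #A else 0) * t ^ (Fintype.card α - #A) := by
  simp only [Matrix.add_apply, Matrix.smul_apply, Matrix.one_apply, Matrix.of_apply, smul_eq_mul,
    mul_ite, mul_one, mul_zero]
  rw [prod_add]
  refine sum_congr rfl fun A _ => ?_
  rw [prod_ite_eq_apply, prod_const, card_univ_sdiff]

theorem permanent_smul_one_add_smul_ones_eq_sum_powerset (s t : R) :
    permanent (s • 1 + t • Matrix.of fun _ _ => 1 : Matrix α α R) =
      ∑ A ∈ (univ : Finset α).powerset,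
        ((Fintype.card α - #A)! : R) * (s ^ #A * t ^ (Fintype.card α - #A)) := by
  simp only [permanent, prod_smul_one_add_smul_ones_apply]
  rw [sum_comm]
  refine sum_congr rfl fun A _ => ?_
  simp only [ite_mul, zero_mul]
  rw [← sum_filter, sum_const, card_perm_fixing_pointwise, nsmul_eq_mul]

theorem permanent_smul_one_add_smul_ones (s t : R) :
    permanent (s • 1 + t • Matrix.of fun _ _ => 1 : Matrix α α R) =
      ∑ ℓ ∈ range (Fintype.card α + 1),
        ((Fintype.card α).descFactorial ℓ : R) * s ^ (Fintype.card α - ℓ) * t ^ ℓ := by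
  set n := Fintype.card α
  rw [permanent_smul_one_add_smul_ones_eq_sum_powerset,
    sum_powerset_apply_card (fun j => ((n - j)! : R) * (s ^ j * t ^ (n - j))), Finset.card_univ,
    ← sum_range_reflect]
  refine sum_congr rfl fun ℓ hℓ => ?_
  have hℓn : ℓ ≤ n := Nat.lt_succ_iff.mp (mem_range.mp hℓ)
  rw [add_tsub_cancel_right, Nat.sub_sub_self hℓn, nsmul_eq_mul, Nat.choose_symm hℓn,
    descFactorial_eq_factorial_mul_choose]
  push_cast
  ring

end

/-- `per(sI + tJ) = Σ_{ℓ=0}^{n} (n!/(n-ℓ)!) s^{n-ℓ} t^ℓ`, where `n!/(n-ℓ)!` is the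
falling factorial `n.descFactorial ℓ`, acting on the ring via the natural cast. -/
theorem stmt4 {R : Type*} [CommRing R] (n : ℕ) (s t : R) :
    permanent (s • (1 : Matrix (Fin n) (Fin n) R) +
        t • Matrix.of (fun _ _ => (1 : R))) =
      ∑ ℓ ∈ Finset.range (n + 1), (n.descFactorial ℓ : R) * s ^ (n - ℓ) * t ^ ℓ := by
  simpa only [Fintype.card_fin] using permanent_smul_one_add_smul_ones (α := Fin n) s t
end

section
/- For real numbers s, t, z with |tz| < 1, the series Σ_{n=0}^{∞} (z^n/n!) · p_n(s,t) converges with sum e^{sz}/(1 - tz), where p_n(s,t) = Σ_{ℓ=0}^{n} (n!/(n-ℓ)!) s^{n-ℓ} t^{ℓ} is the permanent of the n×n matrix sI_n + tJ_n (with p_0(s,t) = 1). -/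
/-- `p_n(s,t) = per(sI_n + tJ_n)` (with `p_0 = 1`, the permanent of the empty matrix). -/
def p (n : ℕ) (s t : ℝ) : ℝ :=
  permanent (s • (1 : Matrix (Fin n) (Fin n) ℝ) + t • Matrix.of (fun _ _ => (1 : ℝ)))

/-
Expanding `∏ i, (s [σ i = i] + t)` over the set `S` of rows where the diagonal entry `s` is
taken, only sets fixed pointwise by `σ` contribute, and `(n - #S)!` permutations fix a given `S`.
Hence `p_n(s,t) / n! = ∑_k s^k / k! * t^(n-k)`, so `∑ z^n p_n / n!` is the Cauchy product of the
series of `e^{sz}` and the geometric series of `1 / (1 - tz)`.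
-/

open Finset

section PermanentOfScalarPlusAllOnes

variable {α : Type*} [Fintype α] [DecidableEq α] {R : Type*} [CommSemiring R]

theorem Equiv.Perm.card_fixing_pointwise (S : Finset α) :
    Fintype.card {σ : Equiv.Perm α // ∀ i ∈ S, σ i = i} =
      (Fintype.card α - #S).factorial := by
  have e : Equiv.Perm {i // i ∉ S} ≃ {σ : Equiv.Perm α // ∀ i ∈ S, σ i = i} :=
    (Equiv.Perm.subtypeEquivSubtypePerm (· ∉ S)).trans
      (Equiv.subtypeEquivRight fun σ => by simp only [not_not])
  rw [← Fintype.card_congr e, Fintype.card_perm, Fintype.card_subtype_compl, Fintype.card_coe]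

theorem Equiv.Perm.prod_ite_fixed_add_eq_sum_powerset (σ : Equiv.Perm α) (s t : R) :
    ∏ i, ((if σ i = i then s else 0) + t) =
      ∑ S ∈ univ.powerset,
        if ∀ i ∈ S, σ i = i then s ^ #S * t ^ (Fintype.card α - #S) else 0 := by
  rw [prod_add]
  refine sum_congr rfl fun S hS => ?_
  split_ifs with hfix
  · rw [prod_congr rfl fun i hi => if_pos (hfix i hi), prod_const, prod_const,
      card_sdiff_of_subset (mem_powerset.mp hS), card_univ]
  · push Not at hfix
    obtain ⟨i, hi, hmoved⟩ := hfix
    rw [prod_eq_zero hi (if_neg hmoved), zero_mul]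

theorem permanent_smul_one_add_smul_allOnes (s t : R) :
    permanent (s • (1 : Matrix α α R) + t • Matrix.of fun _ _ => (1 : R)) =
      ∑ k ∈ range (Fintype.card α + 1),
        ((Fintype.card α).choose k * (Fintype.card α - k).factorial : ℕ) * s ^ k *
          t ^ (Fintype.card α - k) := by
  calc permanent (s • (1 : Matrix α α R) + t • Matrix.of fun _ _ => (1 : R))
      = ∑ σ : Equiv.Perm α, ∏ i, ((if σ i = i then s else 0) + t) := by
        unfold permanent
        refine sum_congr rfl fun σ _ => prod_congr rfl fun i _ => ?_
        simp [Matrix.one_apply, eq_comm]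
    _ = ∑ S ∈ univ.powerset,
          ((Fintype.card α - #S).factorial : R) * (s ^ #S * t ^ (Fintype.card α - #S)) := by
        simp_rw [Equiv.Perm.prod_ite_fixed_add_eq_sum_powerset, sum_comm (s := univ),
          ← sum_filter, sum_const, nsmul_eq_mul, ← Fintype.card_subtype,
          Equiv.Perm.card_fixing_pointwise]
        rfl
    _ = _ := by
        rw [sum_powerset_apply_card
          (fun m => ((Fintype.card α - m).factorial : R) * (s ^ m * t ^ (Fintype.card α - m))),
          card_univ]
        refine sum_congr rfl fun k _ => ?_
        rw [nsmul_eq_mul]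
        push_cast
        ring

end PermanentOfScalarPlusAllOnes

theorem pow_div_factorial_mul_p (n : ℕ) (s t z : ℝ) :
    z ^ n / n.factorial * p n s t =
      ∑ k ∈ range (n + 1), (s * z) ^ k / k.factorial * (t * z) ^ (n - k) := by
  rw [p, permanent_smul_one_add_smul_allOnes, Fintype.card_fin, mul_sum]
  refine sum_congr rfl fun k hk => ?_
  have hkn : k ≤ n := Nat.lt_succ_iff.mp (mem_range.mp hk)
  have hfac : ((n.choose k * (n - k).factorial : ℕ) : ℝ) * k.factorial = n.factorial := by
    rw [← Nat.choose_mul_factorial_mul_factorial hkn]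
    push_cast
    ring
  have hc : ((n.choose k * (n - k).factorial : ℕ) : ℝ) ≠ 0 :=
    Nat.cast_ne_zero.mpr (Nat.mul_ne_zero (Nat.choose_pos hkn).ne' (Nat.factorial_ne_zero _))
  rw [← hfac, ← pow_mul_pow_sub z hkn]
  field_simp
  ring

/-- For `|tz| < 1`, `Σ_{n} (z^n/n!) p_n(s,t) = e^{sz}/(1 - tz)`. -/
theorem stmt5 (s t z : ℝ) (h : |t * z| < 1) :
    HasSum (fun n : ℕ => z ^ n / n.factorial * p n s t)
      (Real.exp (s * z) / (1 - t * z)) := by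
  have hexp : Summable fun k : ℕ => ‖(s * z) ^ k / k.factorial‖ := by
    simpa [abs_div, abs_pow] using Real.summable_pow_div_factorial |s * z|
  have hgeom : Summable fun k : ℕ => ‖(t * z) ^ k‖ := by
    simpa [abs_pow] using summable_geometric_of_abs_lt_one (r := |t * z|) (by rwa [abs_abs])
  have hcauchy := hasSum_sum_range_mul_of_summable_norm hexp hgeom
  rw [(NormedSpace.expSeries_div_hasSum_exp (s * z)).tsum_eq, ← Real.exp_eq_exp_ℝ,
    tsum_geometric_of_abs_lt_one h, ← div_eq_mul_inv] at hcauchy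
  simpa only [pow_div_factorial_mul_p] using hcauchy
end

section
/- Fix a natural number m and real numbers x, t, z with |tz| < 1. Then Σ_{n=0}^{∞} (z^n/n!) · h_{n,m}(x,t) converges with sum t^m · m! · e^{zx}/(1 - tz)^{m+1}, where h_{n,m}(x,t) = ∫_0^∞ (x + ty)^n (ty)^m e^{-y} dy. -/
/-!
Expanding `e^{z(x+ty)}` as a power series under the integral sign turns the generating function
into `∫_0^∞ e^{z(x+ty)} (ty)^m e^{-y} dy = t^m e^{zx} ∫_0^∞ y^m e^{-(1-tz)y} dy`, a Gamma integral.
The interchange is dominated convergence: replacing `x, t, z` by their absolute values gives a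
dominating series whose sum is the same kind of integrand, integrable because `|t||z| < 1`.
-/

/-- The exponential moment polynomials `h_{n,m}(x,t) = ∫_0^∞ (x+ty)^n (ty)^m e^{-y} dy`. -/
noncomputable def expMoment (n m : ℕ) (x t : ℝ) : ℝ :=
  ∫ y in Set.Ioi (0 : ℝ), (x + t * y) ^ n * (t * y) ^ m * Real.exp (-y)

open MeasureTheory Real Set Nat

lemma integral_pow_mul_exp_neg_mul_Ioi (m : ℕ) {b : ℝ} (hb : 0 < b) :
    ∫ y in Ioi (0 : ℝ), y ^ m * exp (-(b * y)) = m ! / b ^ (m + 1) := by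
  have := integral_rpow_mul_exp_neg_mul_Ioi (a := m + 1) (by positivity) hb
  rw [add_sub_cancel_right, Gamma_nat_eq_factorial, ← Nat.cast_add_one, rpow_natCast, one_div,
    inv_pow, inv_mul_eq_div] at this
  simpa only [rpow_natCast] using this

lemma integrableOn_pow_mul_exp_neg_mul_Ioi (m : ℕ) {b : ℝ} (hb : 0 < b) :
    IntegrableOn (fun y : ℝ => y ^ m * exp (-(b * y))) (Ioi 0) :=
  Integrable.of_integral_ne_zero <| by
    rw [integral_pow_mul_exp_neg_mul_Ioi m hb]; positivity

lemma exp_mul_add_mul_mul_pow_mul_exp_neg (m : ℕ) (x t z y : ℝ) :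
    exp (z * (x + t * y)) * ((t * y) ^ m * exp (-y)) =
      exp (z * x) * t ^ m * (y ^ m * exp (-((1 - t * z) * y))) := by
  rw [show -((1 - t * z) * y) = z * (t * y) + -y by ring, mul_add, exp_add, exp_add, mul_pow]
  ring

lemma integrableOn_exp_mul_add_mul_mul_pow_mul_exp_neg (m : ℕ) (x : ℝ) {t z : ℝ}
    (h : t * z < 1) :
    IntegrableOn (fun y => exp (z * (x + t * y)) * ((t * y) ^ m * exp (-y))) (Ioi 0) := by
  simp_rw [exp_mul_add_mul_mul_pow_mul_exp_neg]
  exact (integrableOn_pow_mul_exp_neg_mul_Ioi m (sub_pos.2 h)).const_mul _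

lemma integral_exp_mul_add_mul_mul_pow_mul_exp_neg (m : ℕ) (x : ℝ) {t z : ℝ} (h : t * z < 1) :
    ∫ y in Ioi (0 : ℝ), exp (z * (x + t * y)) * ((t * y) ^ m * exp (-y)) =
      t ^ m * m ! * exp (z * x) / (1 - t * z) ^ (m + 1) := by
  simp_rw [exp_mul_add_mul_mul_pow_mul_exp_neg]
  rw [integral_const_mul, integral_pow_mul_exp_neg_mul_Ioi m (sub_pos.2 h)]
  field_simp

lemma hasSum_pow_div_factorial_mul_pow_mul (z a c : ℝ) :
    HasSum (fun n : ℕ => z ^ n / n ! * (a ^ n * c)) (exp (z * a) * c) := by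
  rw [exp_eq_exp_ℝ]
  have := (NormedSpace.expSeries_div_hasSum_exp (z * a)).mul_right c
  simp_rw [mul_pow, div_mul_eq_mul_div] at this ⊢
  simpa only [mul_assoc] using this

lemma abs_pow_div_factorial_mul_le (n m : ℕ) (x t z : ℝ) {y : ℝ} (hy : 0 ≤ y) :
    |z ^ n / n ! * ((x + t * y) ^ n * ((t * y) ^ m * exp (-y)))| ≤
      |z| ^ n / n ! * ((|x| + |t| * y) ^ n * ((|t| * y) ^ m * exp (-y))) := by
  have : |x + t * y| ≤ |x| + |t| * y := by
    simpa [abs_mul, abs_of_nonneg hy] using abs_add_le x (t * y)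
  simp only [abs_mul, abs_div, abs_pow, abs_exp, Nat.abs_cast, abs_of_nonneg hy]
  gcongr

/-- For `|tz| < 1`, `Σ_{n} (z^n/n!) h_{n,m}(x,t) = t^m · m! · e^{zx}/(1-tz)^{m+1}`. -/
theorem stmt6 (m : ℕ) (x t z : ℝ) (h : |t * z| < 1) :
    HasSum (fun n : ℕ => z ^ n / n.factorial * expMoment n m x t)
      (t ^ m * m.factorial * Real.exp (z * x) / (1 - t * z) ^ (m + 1)) := by
  have habs : |t| * |z| < 1 := by rwa [← abs_mul]
  have key := hasSum_integral_of_dominated_convergence (μ := volume.restrict (Ioi 0))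
    (F := fun n y => z ^ n / n ! * ((x + t * y) ^ n * ((t * y) ^ m * exp (-y))))
    (fun n y => |z| ^ n / n ! * ((|x| + |t| * y) ^ n * ((|t| * y) ^ m * exp (-y))))
    (fun n => by fun_prop)
    (fun n => ae_restrict_of_forall_mem measurableSet_Ioi fun y hy =>
      abs_pow_div_factorial_mul_le n m x t z (le_of_lt hy))
    (ae_of_all _ fun y => (hasSum_pow_div_factorial_mul_pow_mul _ _ _).summable)
    (by simpa only [(hasSum_pow_div_factorial_mul_pow_mul _ _ _).tsum_eq, IntegrableOn]
      using integrableOn_exp_mul_add_mul_mul_pow_mul_exp_neg m |x| habs)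
    (ae_of_all _ fun y => hasSum_pow_div_factorial_mul_pow_mul _ _ _)
  rw [integral_exp_mul_add_mul_mul_pow_mul_exp_neg m x (lt_of_abs_lt h)] at key
  simpa [expMoment, integral_const_mul, mul_assoc] using key
end

section
/- Let n, ℓ be natural numbers with ℓ ≤ n, let s, t be elements of a commutative ring, and fix an ℓ-element subset I of {1,…,n}. Then the sum over all ℓ-element subsets J of {1,…,n} of the permanent of the submatrix of sI_n + tJ_n with rows I and columns J equals Σ_i C(ℓ,i) · C(n-ℓ+i, i) · i! · s^{ℓ-i} t^{i}. -/
/-!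
Summing `permOn M I J` over all `ℓ`-sets `J` is the same as summing `∏ i, M i (f i)` over all
injections `f : I ↪ Fin n`. For `M = sI + tJ` each factor is `s·[f i = i] + t`. Expanding the
product over the set `S` of rows that contribute `s`, the injections fixing `S` pointwise number
`(n - |S|)! / (n - ℓ)!`, so grouping the sets `S` by size `k = ℓ - i` gives
`Σ_i C(ℓ,i) s^(ℓ-i) t^i (n-ℓ+i)! / (n-ℓ)!`, and `(n-ℓ+i)! / (n-ℓ)! = C(n-ℓ+i,i) i!`.
-/

open Finset

namespace Function.Embedding

variable {α β : Type*} [Fintype α] [Fintype β] [DecidableEq α] [DecidableEq β]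

def eqOnEquiv (g : α ↪ β) (S : Finset α) :
    {f : α ↪ β // ∀ a ∈ S, g a = f a} ≃
      ({a // a ∉ S} ↪ ↥(Set.range ((Embedding.subtype (· ∈ S)).trans g))ᶜ) :=
  ((Equiv.embeddingCongr (Equiv.sumCompl (· ∈ S)).symm (Equiv.refl β)).trans
      Equiv.sumEmbeddingEquivSigmaEmbeddingRestricted).subtypeEquiv (fun f => by
        simp only [Equiv.sumEmbeddingEquivSigmaEmbeddingRestricted,
          Equiv.sumEmbeddingEquivProdEmbeddingDisjoint,
          Equiv.prodEmbeddingDisjointEquivSigmaEmbeddingRestricted,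
          Equiv.subtypeProdEquivSigmaSubtype, Equiv.trans_apply, Equiv.embeddingCongr_apply,
          Equiv.coe_fn_mk, Equiv.sigmaCongrRight_apply, Embedding.ext_iff, trans_apply,
          inl_apply, congr_apply, Equiv.refl_toEmbedding, trans_refl, Equiv.symm_symm,
          Function.comp_apply, Equiv.sumCompl_apply_inl, subtype_apply, Subtype.forall]
        exact forall₂_congr fun _ _ => eq_comm) |>.trans (Equiv.sigmaSubtype _)

theorem card_eqOn (g : α ↪ β) (S : Finset α) :
    Fintype.card {f : α ↪ β // ∀ a ∈ S, g a = f a} =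
      (Fintype.card β - #S).descFactorial (Fintype.card α - #S) := by
  rw [Fintype.card_congr (eqOnEquiv g S), Fintype.card_embedding_eq, Fintype.card_compl_set,
    Set.card_range_of_injective (Embedding.injective _), Fintype.card_subtype_compl,
    Fintype.card_coe]

theorem sum_prod_ite_add {R : Type*} [CommSemiring R] (g : α ↪ β) (s t : R) :
    ∑ f : α ↪ β, ∏ a, ((if g a = f a then s else 0) + t) =
      ∑ k ∈ range (Fintype.card α + 1), (Fintype.card α).choose k *
        (s ^ k * t ^ (Fintype.card α - k) *
          (Fintype.card β - k).descFactorial (Fintype.card α - k)) := by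
  calc ∑ f : α ↪ β, ∏ a, ((if g a = f a then s else 0) + t)
      = ∑ f : α ↪ β, ∑ S ∈ univ.powerset,
          (if ∀ a ∈ S, g a = f a then s ^ #S else 0) * t ^ (Fintype.card α - #S) := by
        refine sum_congr rfl fun f _ => ?_
        simp only [prod_add, prod_ite_zero, prod_const, card_sdiff_of_subset (subset_univ _),
          card_univ]
    _ = ∑ S ∈ univ.powerset, s ^ #S * t ^ (Fintype.card α - #S) *
          (Fintype.card β - #S).descFactorial (Fintype.card α - #S) := by
        rw [sum_comm]
        refine sum_congr rfl fun S _ => ?_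
        simp only [ite_mul, zero_mul, sum_ite, sum_const_zero, add_zero, sum_const, nsmul_eq_mul]
        rw [← Fintype.card_subtype, card_eqOn]
        ring
    _ = _ := by
        rw [sum_powerset_apply_card (fun k => s ^ k * t ^ (Fintype.card α - k) *
          ((Fintype.card β - k).descFactorial (Fintype.card α - k) : R)), card_univ]
        simp only [nsmul_eq_mul]

noncomputable def equivOfMapEq (J : Finset β) : {f : α ↪ β // univ.map f = J} ≃ (α ≃ J) where
  toFun f := Equiv.ofBijective
    (fun a => ⟨f.1 a, by have := mem_map_of_mem f.1 (mem_univ a); rwa [f.2] at this⟩)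
    ⟨fun a b h => f.1.injective (congrArg Subtype.val h), fun j => by
      obtain ⟨a, -, ha⟩ := mem_map.1 (f.2.symm ▸ j.2 : (j : β) ∈ univ.map f.1)
      exact ⟨a, Subtype.ext ha⟩⟩
  invFun e := ⟨e.toEmbedding.trans (Embedding.subtype _), by
    ext b
    simp only [mem_map, mem_univ, true_and, trans_apply, Equiv.coe_toEmbedding, subtype_apply]
    exact ⟨fun ⟨a, ha⟩ => ha ▸ (e a).2, fun hb => ⟨e.symm ⟨b, hb⟩, by simp⟩⟩⟩
  left_inv _ := rfl
  right_inv _ := Equiv.ext fun _ => rfl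

theorem sum_powersetCard_sum_equiv {M : Type*} [AddCommMonoid M] (F : (α ↪ β) → M) :
    ∑ J ∈ powersetCard (Fintype.card α) univ, ∑ e : α ≃ J,
        F (e.toEmbedding.trans (Embedding.subtype _)) = ∑ f, F f := by
  have hmaps : ∀ f ∈ (univ : Finset (α ↪ β)),
      univ.map f ∈ powersetCard (Fintype.card α) (univ : Finset β) := fun f _ =>
    mem_powersetCard.2 ⟨subset_univ _, by rw [card_map, card_univ]⟩
  rw [← sum_fiberwise_of_maps_to hmaps]
  refine sum_congr rfl fun J _ => ?_
  rw [sum_subtype _ (p := fun f => univ.map f = J) (fun f => by simp)]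
  exact Fintype.sum_equiv (equivOfMapEq J).symm _ _ fun _ => rfl

end Function.Embedding

theorem sum_powersetCard_permOn {R : Type*} [CommSemiring R] {n : ℕ}
    (M : Matrix (Fin n) (Fin n) R) (I : Finset (Fin n)) :
    ∑ J ∈ powersetCard #I univ, permOn M I J = ∑ f : I ↪ Fin n, ∏ i, M i.1 (f i) := by
  rw [← Function.Embedding.sum_powersetCard_sum_equiv, Fintype.card_coe]
  rfl

theorem sum_range_choose_mul_descFactorial {R : Type*} [CommSemiring R] {ℓ n : ℕ} (h : ℓ ≤ n)
    (s t : R) :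
    ∑ k ∈ range (ℓ + 1), (ℓ.choose k : R) *
        (s ^ k * t ^ (ℓ - k) * ((n - k).descFactorial (ℓ - k) : R)) =
      ∑ i ∈ range (ℓ + 1), (ℓ.choose i : R) * ((n - ℓ + i).choose i : R) * (i.factorial : R) *
        s ^ (ℓ - i) * t ^ i := by
  rw [← sum_range_reflect]
  refine sum_congr rfl fun i hmem => ?_
  have hi : i ≤ ℓ := Nat.lt_succ_iff.1 (mem_range.1 hmem)
  rw [show ℓ + 1 - 1 - i = ℓ - i by omega, show n - (ℓ - i) = n - ℓ + i by omega,
    show ℓ - (ℓ - i) = i by omega, Nat.choose_symm hi, Nat.descFactorial_eq_factorial_mul_choose]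
  push_cast
  ring

theorem stmt10_general {R : Type*} [CommRing R] (n ℓ : ℕ) (s t : R)
    (I : Finset (Fin n)) (hI : I.card = ℓ) :
    ∑ J ∈ Finset.powersetCard ℓ (Finset.univ : Finset (Fin n)),
        permOn (s • (1 : Matrix (Fin n) (Fin n) R) +
          t • Matrix.of (fun _ _ => (1 : R))) I J =
      ∑ i ∈ Finset.range (ℓ + 1),
        (ℓ.choose i : R) * ((n - ℓ + i).choose i : R) * (i.factorial : R) *
          s ^ (ℓ - i) * t ^ i := by
  subst hI
  set M : Matrix (Fin n) (Fin n) R := s • 1 + t • Matrix.of fun _ _ => 1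
  have hM : ∀ i j, M i j = (if i = j then s else 0) + t := fun i j => by
    simp [M, Matrix.one_apply]
  have hsum := Function.Embedding.sum_prod_ite_add (Function.Embedding.subtype (· ∈ I)) s t
  rw [Fintype.card_coe, Fintype.card_fin] at hsum
  simp only [sum_powersetCard_permOn, hM]
  rw [← sum_range_choose_mul_descFactorial (by simpa using I.card_le_univ)]
  exact hsum

/-- Row sums of the `ℓ`-th zeon power of `sI_n + tJ_n`: for a fixed `ℓ`-set `I`,
`Σ_{|J|=ℓ} per((sI_n+tJ_n)_{IJ}) = Σ_i C(ℓ,i) C(n-ℓ+i,i) i! s^{ℓ-i} t^i`. -/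
theorem stmt10 {R : Type*} [CommRing R] (n ℓ : ℕ) (hℓ : ℓ ≤ n) (s t : R)
    (I : Finset (Fin n)) (hI : I.card = ℓ) :
    ∑ J ∈ Finset.powersetCard ℓ (Finset.univ : Finset (Fin n)),
        permOn (s • (1 : Matrix (Fin n) (Fin n) R) +
          t • Matrix.of (fun _ _ => (1 : R))) I J =
      ∑ i ∈ Finset.range (ℓ + 1),
        (ℓ.choose i : R) * ((n - ℓ + i).choose i : R) * (i.factorial : R) *
          s ^ (ℓ - i) * t ^ i :=
  stmt10_general n ℓ s t I hI
end

section
/- Let n, ℓ be natural numbers with ℓ ≤ n and let s, t be real numbers. Then the sum over all ℓ-element subsets I of {1,…,n} of the permanent of the principal submatrix of sI_n + tJ_n with rows and columns indexed by I equals (n!/(n-ℓ)!) · Σ_{k=0}^{ℓ} s^k t^{ℓ-k}/k!. -/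
open Finset
open scoped Nat

lemma Equiv.Perm.card_filter_forall_mem_apply_eq_self {α : Type*} [Fintype α] [DecidableEq α]
    (F : Finset α) :
    #{σ : Equiv.Perm α | ∀ i ∈ F, σ i = i} = (Fintype.card α - #F)! := by
  have hfix : Fintype.card {σ : Equiv.Perm α // ∀ a, ¬(a ∉ F) → σ a = a} =
      (Fintype.card α - #F)! := by
    rw [← Fintype.card_congr (Equiv.Perm.subtypeEquivSubtypePerm (· ∉ F)),
      Fintype.card_perm, Fintype.card_subtype_compl, Fintype.card_coe]
  rw [← hfix, ← Fintype.card_subtype]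
  simp only [not_not]

lemma Finset.prod_ite_add_eq_sum_powerset {α R : Type*} [Fintype α] [CommSemiring R]
    (p : α → Prop) [DecidablePred p] (s t : R) :
    ∏ i, ((if p i then s else 0) + t) =
      ∑ F ∈ (univ : Finset α).powerset,
        (if ∀ i ∈ F, p i then s ^ #F else 0) * t ^ (Fintype.card α - #F) := by
  classical
  rw [prod_add]
  refine sum_congr rfl fun F hF => ?_
  congr 1
  · split_ifs with h
    · rw [prod_congr rfl fun i hi => if_pos (h i hi), prod_const]
    · push Not at h
      obtain ⟨i, hi, hpi⟩ := h
      exact prod_eq_zero hi (if_neg hpi)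
  · rw [prod_const, card_sdiff_of_subset (mem_powerset.mp hF), card_univ]

lemma Matrix.permanent_smul_one_add_smul_of_one {α R : Type*} [Fintype α] [DecidableEq α]
    [CommSemiring R] (s t : R) :
    (s • (1 : Matrix α α R) + t • Matrix.of fun _ _ => (1 : R)).permanent =
      ∑ k ∈ range (Fintype.card α + 1),
        ((Fintype.card α).choose k * (Fintype.card α - k)! : R) *
          (s ^ k * t ^ (Fintype.card α - k)) := by
  set m := Fintype.card α with hm
  have hentry : ∀ (σ : Equiv.Perm α) i,
      (s • 1 + t • Matrix.of fun _ _ => 1 : Matrix α α R) (σ i) i =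
        (if σ i = i then s else 0) + t := by
    intro σ i
    simp [Matrix.one_apply]
  calc (s • (1 : Matrix α α R) + t • Matrix.of fun _ _ => (1 : R)).permanent
      = ∑ F ∈ (univ : Finset α).powerset, ∑ σ : Equiv.Perm α,
          (if ∀ i ∈ F, σ i = i then s ^ #F else 0) * t ^ (m - #F) := by
        simp only [Matrix.permanent, hentry, prod_ite_add_eq_sum_powerset]
        rw [sum_comm]
        congr!
    _ = ∑ F ∈ (univ : Finset α).powerset, ((m - #F)! : R) * (s ^ #F * t ^ (m - #F)) := by
        refine sum_congr rfl fun F _ => ?_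
        rw [← sum_mul, sum_ite, sum_const_zero, add_zero, sum_const,
          Equiv.Perm.card_filter_forall_mem_apply_eq_self, nsmul_eq_mul, mul_assoc]
    _ = ∑ k ∈ range (m + 1), (m.choose k * (m - k)! : R) * (s ^ k * t ^ (m - k)) := by
        rw [sum_powerset_apply_card fun k => ((m - k)! : R) * (s ^ k * t ^ (m - k)), card_univ,
          ← hm]
        simp only [nsmul_eq_mul, mul_assoc]

lemma Matrix.submatrix_smul_one_add_smul_of_one {α β R : Type*} [DecidableEq α] [DecidableEq β]
    [CommSemiring R] (s t : R) {f : β → α} (hf : Function.Injective f) :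
    (s • 1 + t • Matrix.of fun _ _ => 1 : Matrix α α R).submatrix f f =
      s • 1 + t • Matrix.of fun _ _ => 1 := by
  ext i j
  simp [Matrix.one_apply, hf.eq_iff]

lemma permOn_self_eq_permanent_submatrix {n : ℕ} {R : Type*} [CommSemiring R]
    (M : Matrix (Fin n) (Fin n) R) (I : Finset (Fin n)) :
    permOn M I I = (M.submatrix ((↑) : I → Fin n) (↑)).permanent := by
  rw [← Matrix.permanent_transpose]
  rfl

theorem stmt11_general (n ℓ : ℕ) (s t : ℝ) :
    ∑ I ∈ Finset.powersetCard ℓ (Finset.univ : Finset (Fin n)),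
        permOn (s • (1 : Matrix (Fin n) (Fin n) ℝ) +
          t • Matrix.of (fun _ _ => (1 : ℝ))) I I =
      (n.descFactorial ℓ : ℝ) *
        ∑ k ∈ Finset.range (ℓ + 1), s ^ k * t ^ (ℓ - k) / k.factorial := by
  have hI : ∀ I ∈ powersetCard ℓ (univ : Finset (Fin n)),
      permOn (s • (1 : Matrix (Fin n) (Fin n) ℝ) + t • Matrix.of (fun _ _ => (1 : ℝ))) I I =
        ∑ k ∈ range (ℓ + 1), (ℓ.choose k * (ℓ - k)! : ℝ) * (s ^ k * t ^ (ℓ - k)) := by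
    intro I hI
    rw [permOn_self_eq_permanent_submatrix,
      Matrix.submatrix_smul_one_add_smul_of_one _ _ Subtype.val_injective,
      Matrix.permanent_smul_one_add_smul_of_one, Fintype.card_coe, (mem_powersetCard.mp hI).2]
  rw [sum_congr rfl hI, sum_const, card_powersetCard, card_univ, Fintype.card_fin,
    nsmul_eq_mul, mul_sum, mul_sum]
  refine sum_congr rfl fun k hk => ?_
  have hcoeff : (n.choose ℓ * (ℓ.choose k * (ℓ - k)!) * k ! : ℝ) = n.descFactorial ℓ := by
    rw [Nat.descFactorial_eq_factorial_mul_choose,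
      ← Nat.choose_mul_factorial_mul_factorial (mem_range_succ_iff.mp hk)]
    push_cast
    ring
  field_simp
  linear_combination (s ^ k * t ^ (ℓ - k)) * hcoeff

/-- Trace of the `ℓ`-th zeon power of `sI_n + tJ_n`:
`Σ_{|I|=ℓ} per((sI_n+tJ_n)_{II}) = (n!/(n-ℓ)!) · Σ_{k=0}^{ℓ} s^k t^{ℓ-k}/k!`. -/
theorem stmt11 (n ℓ : ℕ) (hℓ : ℓ ≤ n) (s t : ℝ) :
    ∑ I ∈ Finset.powersetCard ℓ (Finset.univ : Finset (Fin n)),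
        permOn (s • (1 : Matrix (Fin n) (Fin n) ℝ) +
          t • Matrix.of (fun _ _ => (1 : ℝ))) I I =
      (n.descFactorial ℓ : ℝ) *
        ∑ k ∈ Finset.range (ℓ + 1), s ^ k * t ^ (ℓ - k) / k.factorial :=
  stmt11_general n ℓ s t
end

section
/- Let R be a commutative ring and s, t ∈ R. For natural numbers n ≥ 1 and 1 ≤ ℓ ≤ n, define P_{n,ℓ}(s,t) as the permanent of the n×n matrix M_{n,ℓ} whose first n-ℓ diagonal entries equal s+t, whose remaining ℓ diagonal entries equal t, and all of whose off-diagonal entries equal t (with P_{0,0} = 1). Then P_{n,ℓ}(s,t) = P_{n,ℓ-1}(s,t) - s · P_{n-1,ℓ-1}(s,t). -/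
/-- The `n×n` matrix `M_{n,ℓ}(s,t)` whose first `n-ℓ` diagonal entries are `s+t`
and all of whose other entries are `t`: the `(i,j)`-entry is
`t + s·[i = j and i ≤ n-ℓ]` (`0`-indexed: `i < n-ℓ`). -/
def Mmat {R : Type*} [CommRing R] (n ℓ : ℕ) (s t : R) : Matrix (Fin n) (Fin n) R :=
  Matrix.of fun i j => t + if i = j ∧ (i : ℕ) < n - ℓ then s else 0

/-- `P_{n,ℓ}(s,t) = per(M_{n,ℓ}(s,t))`. -/
def P {R : Type*} [CommRing R] (n ℓ : ℕ) (s t : R) : R :=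
  permanent (Mmat n ℓ s t)

open Finset Equiv

section Permanent

variable {α β R : Type*} [Fintype α] [DecidableEq α] [Fintype β] [DecidableEq β]
  [CommSemiring R]

theorem permanent_submatrix_equiv (M : Matrix α α R) (e : β ≃ α) :
    permanent (M.submatrix e e) = permanent M := by
  unfold permanent
  rw [← Equiv.sum_comp e.permCongr]
  refine sum_congr rfl fun σ _ => ?_
  rw [← Equiv.prod_comp e]
  simp [Equiv.permCongr_apply]

theorem sum_ite_perm_apply_eq_self (k : α) (f : Perm α → R) :
    ∑ σ : Perm α, (if σ k = k then f σ else 0) =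
      ∑ τ : Perm {i // i ≠ k}, f (Perm.ofSubtype τ) := by
  rw [← sum_filter, sum_subtype _ (p := fun σ : Perm α => ∀ a, ¬ a ≠ k → σ a = a) (by simp)]
  exact (Fintype.sum_equiv (Perm.subtypeEquivSubtypePerm _) _ _ fun _ => rfl).symm

theorem permanent_add_single_diag (M : Matrix α α R) (k : α) (s : R) :
    permanent (M + Matrix.single k k s) =
      permanent M + s * permanent (M.submatrix ((↑) : {i // i ≠ k} → α) (↑)) := by
  have hterm : ∀ σ : Perm α, ∏ i, (M + Matrix.single k k s) i (σ i) =
      ∏ i, M i (σ i) + s * if σ k = k then ∏ i ∈ {k}ᶜ, M i (σ i) else 0 := by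
    intro σ
    have hoff : ∏ i ∈ {k}ᶜ, (M + Matrix.single k k s) i (σ i) = ∏ i ∈ {k}ᶜ, M i (σ i) :=
      prod_congr rfl fun i hi => by
        rw [Matrix.add_apply, Matrix.single_apply_of_row_ne (by simpa [eq_comm] using hi),
          add_zero]
    rw [Fintype.prod_eq_mul_prod_compl k, Fintype.prod_eq_mul_prod_compl k, hoff]
    by_cases h : σ k = k
    · simp [h, add_mul]
    · simp [h, Ne.symm h]
  have hminor : ∀ τ : Perm {i // i ≠ k},
      ∏ i ∈ {k}ᶜ, M i (Perm.ofSubtype τ i) = ∏ i : {i // i ≠ k}, M i (τ i) := by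
    intro τ
    rw [prod_subtype _ (p := (· ≠ k)) (by simp)]
    exact prod_congr rfl fun i _ => by rw [Perm.ofSubtype_apply_of_mem τ i.2]
  simp only [permanent, hterm, sum_add_distrib, ← mul_sum, sum_ite_perm_apply_eq_self, hminor]
  rfl

theorem permanent_add_single_diag_succAbove {m : ℕ} (M : Matrix (Fin (m + 1)) (Fin (m + 1)) R)
    (k : Fin (m + 1)) (s : R) :
    permanent (M + Matrix.single k k s) =
      permanent M + s * permanent (M.submatrix k.succAbove k.succAbove) := by
  rw [permanent_add_single_diag, ← permanent_submatrix_equiv _ (finSuccAboveEquiv k)]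
  rfl

end Permanent

section Mmat

variable {R : Type*} [CommRing R] (s t : R)

theorem Mmat_pred_eq_add_single {n ℓ : ℕ} {k : Fin n} (hk : (k : ℕ) + ℓ = n) :
    Mmat n (ℓ - 1) s t = Mmat n ℓ s t + Matrix.single k k s := by
  ext i j
  simp only [Mmat, Matrix.add_apply, Matrix.of_apply, Matrix.single_apply, Fin.ext_iff]
  split_ifs <;> first | (exfalso; omega) | simp

theorem Mmat_submatrix_succAbove {m ℓ : ℕ} {k : Fin (m + 1)} (hk : (k : ℕ) + ℓ = m + 1) :
    (Mmat (m + 1) ℓ s t).submatrix k.succAbove k.succAbove = Mmat m (ℓ - 1) s t := by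
  ext i j
  have hdiag : ((k.succAbove i : ℕ) < m + 1 - ℓ) ↔ (i : ℕ) < m - (ℓ - 1) := by
    unfold Fin.succAbove
    split_ifs with h <;> simp [Fin.lt_def] at h ⊢ <;> omega
  simp only [Mmat, Matrix.submatrix_apply, Matrix.of_apply,
    Fin.succAbove_right_injective.eq_iff, hdiag]

end Mmat

theorem stmt12_general {R : Type*} [CommRing R] (s t : R) (n ℓ : ℕ)
    (h1 : 1 ≤ ℓ) (h2 : ℓ ≤ n) :
    P n ℓ s t = P n (ℓ - 1) s t - s * P (n - 1) (ℓ - 1) s t := by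
  obtain ⟨m, rfl⟩ : ∃ m, n = m + 1 := ⟨n - 1, by omega⟩
  let k : Fin (m + 1) := ⟨m + 1 - ℓ, by omega⟩
  have hk : (k : ℕ) + ℓ = m + 1 := by simp only [k]; omega
  rw [P, P, P, Mmat_pred_eq_add_single s t hk, permanent_add_single_diag_succAbove,
    Mmat_submatrix_succAbove s t hk, Nat.add_sub_cancel]
  ring

/-- The recurrence `P_{n,ℓ} = P_{n,ℓ-1} - s·P_{n-1,ℓ-1}` for `n ≥ 1`, `1 ≤ ℓ ≤ n`. -/
theorem stmt12 {R : Type*} [CommRing R] (s t : R) (n ℓ : ℕ)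
    (hn : 1 ≤ n) (h1 : 1 ≤ ℓ) (h2 : ℓ ≤ n) :
    P n ℓ s t = P n (ℓ - 1) s t - s * P (n - 1) (ℓ - 1) s t :=
  stmt12_general s t n ℓ h1 h2
end

section
/- Let R be a commutative ring, s, t ∈ R, and let 0 ≤ ℓ ≤ n be natural numbers. Then P_{n,ℓ}(s,t) = Σ_{j=ℓ}^{n} C(n-ℓ, n-j) · j! · s^{n-j} t^{j}, where P_{n,ℓ}(s,t) is the permanent of the n×n matrix having n-ℓ diagonal entries equal to s+t and all other entries equal to t. -/
/-!
Write the matrix as `t + [i = j ∧ p i] s` with `p i := i < n - ℓ`. Expanding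
`∏ᵢ (t + [i = σ i ∧ p i] s)` over the set `S` of rows that contribute `s`, a term survives only if
`σ` fixes `S` pointwise and `S ⊆ {i | p i}`, and there are `(n - |S|)!` such `σ`. Grouping by
`k = |S|` gives `∑ₖ C(n-ℓ, k) (n-k)! sᵏ tⁿ⁻ᵏ`; substituting `j = n - k` gives the stated form.
-/

open Finset

section

variable {α : Type*} [Fintype α] [DecidableEq α]

theorem card_perm_fixing (S : Finset α) :
    #{σ : Equiv.Perm α | ∀ i ∈ S, σ i = i} = (Fintype.card α - #S).factorial := by
  rw [← Fintype.card_subtype]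
  have e : {σ : Equiv.Perm α // ∀ i ∈ S, σ i = i} ≃ Equiv.Perm {i // i ∉ S} :=
    (Equiv.subtypeEquivRight (by simp)).trans
      (Equiv.Perm.subtypeEquivSubtypePerm (· ∉ S)).symm
  rw [Fintype.card_congr e, Fintype.card_perm, Fintype.card_subtype_compl, Fintype.card_coe]

theorem sum_perm_prod_ite_diag {R : Type*} [CommSemiring R] (p : α → Prop) [DecidablePred p]
    (s : R) (S : Finset α) :
    ∑ σ : Equiv.Perm α, ∏ i ∈ S, (if i = σ i ∧ p i then s else 0) =
      if ∀ i ∈ S, p i then ((Fintype.card α - #S).factorial : R) * s ^ #S else 0 := by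
  simp only [prod_ite_zero, prod_const]
  split_ifs with hp
  · have hfix (σ : Equiv.Perm α) : (∀ i ∈ S, i = σ i ∧ p i) ↔ ∀ i ∈ S, σ i = i :=
      ⟨fun h i hi => (h i hi).1.symm, fun h i hi => ⟨(h i hi).symm, hp i hi⟩⟩
    simp only [hfix]
    rw [← sum_filter, sum_const, card_perm_fixing, nsmul_eq_mul]
  · exact sum_eq_zero fun σ _ => if_neg fun h => hp fun i hi => (h i hi).2

theorem permanent_const_add_ite_diag {R : Type*} [CommSemiring R] (p : α → Prop)
    [DecidablePred p] (s t : R) :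
    permanent (Matrix.of fun i j => t + if i = j ∧ p i then s else 0) =
      ∑ k ∈ range (#{i | p i} + 1), ((#{i | p i}).choose k : R) *
        (Fintype.card α - k).factorial * s ^ k * t ^ (Fintype.card α - k) := by
  have hpowerset : (univ.powerset.filter fun S : Finset α => ∀ i ∈ S, p i) =
      (univ.filter p).powerset := by
    ext S; simp [subset_iff]
  calc permanent (Matrix.of fun i j => t + if i = j ∧ p i then s else 0)
      = ∑ σ : Equiv.Perm α, ∑ S ∈ univ.powerset,
          (∏ i ∈ S, if i = σ i ∧ p i then s else 0) * t ^ (Fintype.card α - #S) := by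
        refine sum_congr rfl fun σ _ => ?_
        simp only [Matrix.of_apply, add_comm t, prod_add, prod_const,
          card_sdiff_of_subset (subset_univ _), card_univ]
    _ = ∑ S ∈ univ.powerset, if ∀ i ∈ S, p i then
          ((Fintype.card α - #S).factorial : R) * s ^ #S * t ^ (Fintype.card α - #S) else 0 := by
        rw [sum_comm]
        simp only [← sum_mul, sum_perm_prod_ite_diag, ite_mul, zero_mul]
    _ = ∑ S ∈ (univ.filter p).powerset,
          ((Fintype.card α - #S).factorial : R) * s ^ #S * t ^ (Fintype.card α - #S) := by
        rw [← sum_filter, hpowerset]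
    _ = _ := by
        rw [sum_powerset_apply_card fun k =>
          ((Fintype.card α - k).factorial : R) * s ^ k * t ^ (Fintype.card α - k)]
        simp only [nsmul_eq_mul, mul_assoc]

end

theorem sum_range_choose_eq_sum_Icc {R : Type*} [CommSemiring R] (s t : R) {n ℓ : ℕ}
    (h : ℓ ≤ n) :
    ∑ k ∈ range (n - ℓ + 1), ((n - ℓ).choose k : R) * (n - k).factorial * s ^ k * t ^ (n - k) =
      ∑ j ∈ Icc ℓ n, ((n - ℓ).choose (n - j) : R) * j.factorial * s ^ (n - j) * t ^ j := by
  have hreflect := sum_Ico_reflect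
    (fun j => ((n - ℓ).choose (n - j) : R) * j.factorial * s ^ (n - j) * t ^ j) 0
    (m := n - ℓ + 1) (n := n) (by omega)
  rw [Nat.Ico_zero_eq_range, show n + 1 - (n - ℓ + 1) = ℓ by omega, Nat.sub_zero,
    Ico_add_one_right_eq_Icc] at hreflect
  rw [← hreflect]
  refine sum_congr rfl fun k hk => ?_
  rw [Nat.sub_sub_self (by simp at hk; omega)]

/-- `P_{n,ℓ}(s,t) = Σ_{j=ℓ}^{n} C(n-ℓ, n-j) · j! · s^{n-j} t^{j}`. -/
theorem stmt13 {R : Type*} [CommRing R] (s t : R) (n ℓ : ℕ) (h : ℓ ≤ n) :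
    P n ℓ s t =
      ∑ j ∈ Finset.Icc ℓ n,
        ((n - ℓ).choose (n - j) : R) * (j.factorial : R) * s ^ (n - j) * t ^ j := by
  have hcard : #{i : Fin n | (i : ℕ) < n - ℓ} = n - ℓ := by
    rw [Fin.card_filter_val_lt]; omega
  rw [P, Mmat, permanent_const_add_ite_diag, hcard, Fintype.card_fin,
    sum_range_choose_eq_sum_Icc s t h]
end

section
/- Let R be a commutative ring, s, t ∈ R, and let 0 ≤ ℓ ≤ n be natural numbers. Then P_{n,ℓ}(s,t) = Σ_{j=0}^{ℓ} C(ℓ,j) · (-1)^j · s^j · P_{n-j,0}(s,t), where P_{n,ℓ}(s,t) is the permanent of the n×n matrix having n-ℓ diagonal entries equal to s+t and all other entries equal to t, and P_{m,0}(s,t) = per(sI_m + tJ_m). -/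
open Finset
open scoped Nat

lemma card_perm_fixing_finset {α : Type*} [Fintype α] [DecidableEq α] (S : Finset α) :
    Fintype.card {σ : Equiv.Perm α // ∀ i ∈ S, σ i = i} = (Fintype.card α - #S)! := by
  have e : {σ : Equiv.Perm α // ∀ i ∈ S, σ i = i} ≃ Equiv.Perm {i : α // i ∉ S} :=
    (Equiv.subtypeEquivRight fun σ => by simp only [not_not]).trans
      (Equiv.Perm.subtypeEquivSubtypePerm _).symm
  rw [Fintype.card_congr e, Fintype.card_perm, Fintype.card_subtype_compl, Fintype.card_coe]

theorem permanent_const_add_diagonal {α : Type*} [Fintype α] [DecidableEq α] {R : Type*}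
    [CommSemiring R] (t : R) (d : α → R) :
    permanent (Matrix.of fun i j => t + if i = j then d i else 0) =
      ∑ S : Finset α, (∏ i ∈ S, d i) * (t ^ (Fintype.card α - #S) * (Fintype.card α - #S)!) := by
  have expand (σ : Equiv.Perm α) : ∏ i, (t + if i = σ i then d i else 0) =
      ∑ S : Finset α, (∏ i ∈ S, if σ i = i then d i else 0) * t ^ (Fintype.card α - #S) := by
    simp_rw [add_comm t, prod_add, powerset_univ, prod_const, card_univ_sdiff, eq_comm (b := σ _)]
  -- `prod_ite_zero` decides `∀ i ∈ S, _` by a different instance than `sum_ite` synthesizes.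
  have fixing (σ : Equiv.Perm α) (S : Finset α) :
      ∏ i ∈ S, (if σ i = i then d i else 0) = if ∀ i ∈ S, σ i = i then ∏ i ∈ S, d i else 0 := by
    convert prod_ite_zero
  unfold permanent
  simp only [Matrix.of_apply, expand, fixing]
  rw [sum_comm]
  refine sum_congr rfl fun S _ => ?_
  rw [← sum_mul, sum_ite, sum_const_zero, add_zero, sum_const, ← Fintype.card_subtype,
    card_perm_fixing_finset, nsmul_eq_mul]
  ring

section

variable {R : Type*} [CommRing R]

theorem P_eq_sum_choose (n ℓ : ℕ) (s t : R) :
    P n ℓ s t =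
      ∑ k ∈ range (n - ℓ + 1), ((n - ℓ).choose k : R) * (s ^ k * (t ^ (n - k) * (n - k)!)) := by
  set D : Finset (Fin n) := {i | (i : ℕ) < n - ℓ}
  have hMmat :
      Mmat n ℓ s t = Matrix.of fun i j => t + if i = j then (if i ∈ D then s else 0) else 0 := by
    ext i j
    simp [Mmat, D, ite_and]
  have hD : #D = n - ℓ := by
    rw [Fin.card_filter_val_lt]
    omega
  rw [P, hMmat, permanent_const_add_diagonal, Fintype.card_fin, ← hD]
  calc _ = ∑ S ∈ D.powerset, s ^ #S * (t ^ (n - #S) * (n - #S)!) :=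
        (sum_subset (subset_univ _) fun S _ hS => ?_).symm.trans (sum_congr rfl fun S hS => ?_)
    _ = _ := (sum_powerset_apply_card fun k => s ^ k * (t ^ (n - k) * (n - k)!)).trans
        (sum_congr rfl fun _ _ => nsmul_eq_mul _ _)
  · obtain ⟨i, hiS, hiD⟩ := not_subset.mp (mem_powerset.not.mp hS)
    rw [prod_eq_zero hiS (if_neg hiD), zero_mul]
  · rw [prod_ite_of_true fun i hi => mem_powerset.mp hS hi, prod_const]

theorem P_succ_eq_sub {n ℓ : ℕ} (h : ℓ < n) (s t : R) :
    P n (ℓ + 1) s t = P n ℓ s t - s * P (n - 1) ℓ s t := by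
  obtain ⟨d, rfl⟩ : ∃ d, n = ℓ + d + 1 := ⟨n - ℓ - 1, by omega⟩
  set m := ℓ + d + 1
  simp only [P_eq_sum_choose, show m - ℓ = d + 1 by omega, show m - (ℓ + 1) = d by omega,
    show m - 1 - ℓ = d by omega]
  rw [sum_choose_succ_mul (fun k _ => s ^ k * (t ^ (m - k) * (m - k)!)) d, mul_sum, add_sub_assoc,
    left_eq_add, sub_eq_zero]
  refine sum_congr rfl fun k _ => ?_
  rw [Nat.sub_sub, add_comm 1 k]
  ring

theorem eq_sum_choose_of_eq_sub_mul (s : R) (f : ℕ → ℕ → R)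
    (hf : ∀ n ℓ, ℓ < n → f n (ℓ + 1) = f n ℓ - s * f (n - 1) ℓ) {n ℓ : ℕ} (h : ℓ ≤ n) :
    f n ℓ = ∑ j ∈ range (ℓ + 1), (ℓ.choose j : R) * (-1) ^ j * s ^ j * f (n - j) 0 := by
  induction ℓ generalizing n with
  | zero => simp
  | succ ℓ ih =>
    -- `g j k` with `j + k = ℓ + 1` is the `j`-th summand, in the shape of `sum_choose_succ_mul`.
    set g : ℕ → ℕ → R := fun j k => (-1) ^ j * s ^ j * f (k + (n - (ℓ + 1))) 0
    have hg {j k : ℕ} (hjk : j + k = ℓ + 1) : g j k = (-1) ^ j * s ^ j * f (n - j) 0 := by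
      simp only [g]
      rw [show k + (n - (ℓ + 1)) = n - j by omega]
    have hA : ∑ j ∈ range (ℓ + 1), (ℓ.choose j : R) * (-1) ^ j * s ^ j * f (n - j) 0 =
        ∑ j ∈ range (ℓ + 1), (ℓ.choose j : R) * g j (ℓ + 1 - j) :=
      sum_congr rfl fun j hj => by
        rw [hg (by grind)]
        ring
    have hB : s * ∑ j ∈ range (ℓ + 1), (ℓ.choose j : R) * (-1) ^ j * s ^ j * f (n - 1 - j) 0 =
        -∑ j ∈ range (ℓ + 1), (ℓ.choose j : R) * g (j + 1) (ℓ - j) := by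
      rw [mul_sum, ← sum_neg_distrib]
      refine sum_congr rfl fun j hj => ?_
      rw [hg (by grind), Nat.sub_sub, add_comm 1 j]
      ring
    have hC : ∑ j ∈ range (ℓ + 2), ((ℓ + 1).choose j : R) * (-1) ^ j * s ^ j * f (n - j) 0 =
        ∑ j ∈ range (ℓ + 2), ((ℓ + 1).choose j : R) * g j (ℓ + 1 - j) :=
      sum_congr rfl fun j hj => by
        rw [hg (by grind)]
        ring
    rw [hf n ℓ (by omega), ih (by omega), ih (by omega), hA, hB, hC, sum_choose_succ_mul]
    ring

end

/-- `P_{n,ℓ}(s,t) = Σ_{j=0}^{ℓ} C(ℓ,j) (-1)^j s^j P_{n-j,0}(s,t)`, where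
`P_{m,0}(s,t) = per(sI_m + tJ_m)`. -/
theorem stmt14 {R : Type*} [CommRing R] (s t : R) (n ℓ : ℕ) (h : ℓ ≤ n) :
    P n ℓ s t =
      ∑ j ∈ Finset.range (ℓ + 1),
        (ℓ.choose j : R) * (-1 : R) ^ j * s ^ j * P (n - j) 0 s t :=
  eq_sum_choose_of_eq_sub_mul s (fun n ℓ => P n ℓ s t) (fun _ _ hℓ => P_succ_eq_sub hℓ s t) h
end

section
/- Fix real numbers s, t, x with t ≠ 0 and x ≠ -1, and for each n let Q_n(x) = Σ_{ℓ=0}^{n} C(n,ℓ) x^ℓ P_{n,ℓ}(s,t), where P_{n,ℓ}(s,t) is the permanent of the n×n matrix having n-ℓ diagonal entries equal to s+t and all other entries equal to t. Then Q_n(x) / (t^n (1+x)^n · n!) tends to e^{s/(t(1+x))} as n → ∞. -/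
open Finset Nat

/-! Expanding `∏ i (t + s·[σ i = i, i marked])` by the set `T` of rows that contribute `s`, each
`k`-set `T` of marked indices is counted once for each of the `(n - k)!` permutations fixing it
pointwise, so `P_{n,ℓ} = Σ_k C(n-ℓ,k) (n-k)! s^k t^(n-k)`. Summing against `C(n,ℓ) x^ℓ`, the
identity `C(n,ℓ) C(n-ℓ,k) = C(n,k) C(n-k,ℓ)` and the binomial theorem give
`Q_n(x) = Σ_k C(n,k) (n-k)! s^k (t(1+x))^(n-k)`. Hence `Q_n(x) / (t^n (1+x)^n n!)` is exactly
the partial sum `Σ_{k ≤ n} y^k / k!` of the exponential series at `y = s / (t(1+x))`. -/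

theorem Equiv.Perm.card_filter_forall_mem_apply_eq {α : Type*} [Fintype α] [DecidableEq α]
    (S : Finset α) :
    #{σ : Equiv.Perm α | ∀ i ∈ S, σ i = i} = (Fintype.card α - #S)! := by
  have e : {σ : Equiv.Perm α // ∀ i ∈ S, σ i = i} ≃ Equiv.Perm {a // a ∉ S} :=
    (Equiv.subtypeEquivRight fun σ => by simp only [not_not]).trans
      (Equiv.Perm.subtypeEquivSubtypePerm (· ∉ S)).symm
  rw [← Fintype.card_subtype, Fintype.card_congr e, Fintype.card_perm,
    Fintype.card_subtype_compl, Fintype.card_coe]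

section

variable {α R : Type*} [Fintype α] [DecidableEq α] [CommSemiring R]

theorem sum_perm_prod_ite_eq_and_mem (A T : Finset α) (s : R) :
    ∑ σ : Equiv.Perm α, ∏ i ∈ T, (if i = σ i ∧ i ∈ A then s else 0)
      = if T ⊆ A then ((Fintype.card α - #T)! : R) * s ^ #T else 0 := by
  simp_rw [prod_ite_zero, prod_const]
  by_cases hTA : T ⊆ A
  · have hfix (σ : Equiv.Perm α) : (∀ i ∈ T, i = σ i ∧ i ∈ A) ↔ ∀ i ∈ T, σ i = i :=
      ⟨fun h i hi => (h i hi).1.symm, fun h i hi => ⟨(h i hi).symm, hTA hi⟩⟩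
    simp_rw [hfix, if_pos hTA, ← sum_filter, sum_const, nsmul_eq_mul,
      Equiv.Perm.card_filter_forall_mem_apply_eq]
  · have hnot (σ : Equiv.Perm α) : ¬ ∀ i ∈ T, i = σ i ∧ i ∈ A :=
      fun h => hTA fun i hi => (h i hi).2
    simp only [hnot, hTA, if_false, sum_const_zero]

theorem permanent_const_add_ite_mem (A : Finset α) (s t : R) :
    permanent (Matrix.of fun i j => t + if i = j ∧ i ∈ A then s else 0)
      = ∑ k ∈ range (Fintype.card α + 1),
          ((#A).choose k * (Fintype.card α - k)! : ℕ) * s ^ k * t ^ (Fintype.card α - k) := by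
  have hexpand (σ : Equiv.Perm α) :
      ∏ i, (t + if i = σ i ∧ i ∈ A then s else 0)
        = ∑ T ∈ univ.powerset,
            (∏ i ∈ T, if i = σ i ∧ i ∈ A then s else 0) * t ^ (Fintype.card α - #T) := by
    simp_rw [add_comm t, prod_add, prod_const, ← compl_eq_univ_sdiff, card_compl]
  calc _ = ∑ T : Finset α, (if T ⊆ A then ((Fintype.card α - #T)! : R) * s ^ #T else 0)
            * t ^ (Fintype.card α - #T) := by
        simp_rw [permanent, Matrix.of_apply, hexpand, powerset_univ]
        rw [sum_comm]
        simp_rw [← sum_mul, sum_perm_prod_ite_eq_and_mem]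
    _ = ∑ T ∈ A.powerset, ((Fintype.card α - #T)! : R) * s ^ #T * t ^ (Fintype.card α - #T) := by
        simp_rw [ite_mul, zero_mul, ← sum_filter, filter_subset_univ]
    _ = ∑ k ∈ range (#A + 1),
          ((#A).choose k * (Fintype.card α - k)! : ℕ) * s ^ k * t ^ (Fintype.card α - k) := by
        rw [sum_powerset_apply_card fun k => ((Fintype.card α - k)! : R) * s ^ k * t ^ _]
        simp_rw [nsmul_eq_mul, cast_mul, mul_assoc]
    _ = _ := by
        refine sum_subset (range_subset_range.2 (by simpa using card_le_univ A)) fun k _ hk => ?_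
        rw [choose_eq_zero_of_lt (by simpa using hk), zero_mul, cast_zero, zero_mul, zero_mul]

end

theorem P_eq_sum {R : Type*} [CommRing R] (n ℓ : ℕ) (s t : R) :
    P n ℓ s t = ∑ k ∈ range (n + 1), ((n - ℓ).choose k * (n - k)! : ℕ) * s ^ k * t ^ (n - k) := by
  have hM : Mmat n ℓ s t = Matrix.of fun i j =>
      t + if i = j ∧ i ∈ ({i : Fin n | i < n - ℓ} : Finset _) then s else 0 := by
    ext; simp [Mmat]
  rw [P, hM, permanent_const_add_ite_mem, Fin.card_filter_val_lt, Fintype.card_fin,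
    min_eq_right (sub_le n ℓ)]

theorem Nat.choose_mul_choose_sub_comm (n ℓ k : ℕ) :
    n.choose ℓ * (n - ℓ).choose k = n.choose k * (n - k).choose ℓ := by
  have hℓ := choose_mul (n := n) (le_add_right ℓ k)
  have hk := choose_mul (n := n) (le_add_left k ℓ)
  rw [Nat.add_sub_cancel_left] at hℓ
  rw [Nat.add_sub_cancel] at hk
  rw [← hℓ, ← hk, choose_symm_add]

theorem sum_choose_mul_choose_sub_mul_pow {R : Type*} [CommSemiring R] (n k : ℕ) (x : R) :
    ∑ ℓ ∈ range (n + 1), (n.choose ℓ * (n - ℓ).choose k : ℕ) * x ^ ℓ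
      = n.choose k * (1 + x) ^ (n - k) := by
  simp_rw [Nat.choose_mul_choose_sub_comm n _ k, cast_mul, mul_assoc, ← mul_sum]
  congr 1
  rw [add_comm (1 : R), add_pow]
  simp only [one_pow, mul_one, mul_comm (x ^ _) ((Nat.choose _ _ : ℕ) : R)]
  symm
  refine sum_subset (range_subset_range.2 (by omega)) fun ℓ _ hℓ => ?_
  rw [choose_eq_zero_of_lt (by simpa using hℓ), cast_zero, zero_mul]

theorem sum_choose_mul_pow_mul_P {R : Type*} [CommRing R] (n : ℕ) (s t x : R) :
    ∑ ℓ ∈ range (n + 1), (n.choose ℓ : R) * x ^ ℓ * P n ℓ s t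
      = ∑ k ∈ range (n + 1), (n.choose k * (n - k)! : ℕ) * s ^ k * (t * (1 + x)) ^ (n - k) := by
  simp_rw [P_eq_sum, mul_sum]
  rw [sum_comm]
  refine sum_congr rfl fun k _ => ?_
  calc _ = (∑ ℓ ∈ range (n + 1), (n.choose ℓ * (n - ℓ).choose k : ℕ) * x ^ ℓ)
          * ((n - k)! * s ^ k * t ^ (n - k)) := by
        rw [sum_mul]
        refine sum_congr rfl fun ℓ _ => ?_
        push_cast
        ring
    _ = _ := by
        rw [sum_choose_mul_choose_sub_mul_pow, mul_pow]
        push_cast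
        ring

theorem cast_choose_mul_factorial_mul_pow_div {K : Type*} [Field K] [CharZero K] {n k : ℕ}
    (hk : k ≤ n) (s : K) {u : K} (hu : u ≠ 0) :
    ((n.choose k * (n - k)! : ℕ) : K) * s ^ k * u ^ (n - k) / (u ^ n * n !)
      = (s / u) ^ k / k ! := by
  have hfact : (n.choose k * k ! * (n - k)! : K) = n ! := by
    exact_mod_cast choose_mul_factorial_mul_factorial hk
  have hchoose : (n.choose k : K) ≠ 0 := by exact_mod_cast (choose_pos hk).ne'
  have hfact_sub : ((n - k)! : K) ≠ 0 := cast_ne_zero.2 (factorial_ne_zero _)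
  rw [← hfact, pow_sub₀ u hu hk, div_pow]
  push_cast
  field_simp

/-- Asymptotics of the associated polynomials: for `t ≠ 0`, `x ≠ -1`,
`Q_n(x) / (t^n (1+x)^n n!) → e^{s/(t(1+x))}` as `n → ∞`. -/
theorem stmt17 (s t x : ℝ) (ht : t ≠ 0) (hx : x ≠ -1) :
    Filter.Tendsto
      (fun n : ℕ =>
        (∑ ℓ ∈ Finset.range (n + 1), (n.choose ℓ : ℝ) * x ^ ℓ * P n ℓ s t) /
          (t ^ n * (1 + x) ^ n * n.factorial))
      Filter.atTop (nhds (Real.exp (s / (t * (1 + x))))) := by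
  have hu : t * (1 + x) ≠ 0 := mul_ne_zero ht fun h => hx (by linarith)
  have hpartial (n : ℕ) :
      (∑ ℓ ∈ range (n + 1), (n.choose ℓ : ℝ) * x ^ ℓ * P n ℓ s t) / (t ^ n * (1 + x) ^ n * n !)
        = ∑ k ∈ range (n + 1), (s / (t * (1 + x))) ^ k / k ! := by
    rw [sum_choose_mul_pow_mul_P, ← mul_pow, sum_div]
    exact sum_congr rfl fun k hk =>
      cast_choose_mul_factorial_mul_pow_div (mem_range_succ_iff.1 hk) s hu
  simp_rw [hpartial, Real.exp_eq_exp_ℝ]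
  exact (NormedSpace.expSeries_div_hasSum_exp _).tendsto_sum_nat.comp
    (Filter.tendsto_add_atTop_nat 1)
end

section
/- Let 0 ≤ ℓ ≤ n be natural numbers. The number of permutations σ of {1,…,n} such that σ(i) ≠ i for every i with 1 ≤ i ≤ n-ℓ equals Σ_{j=0}^{ℓ} C(ℓ, j) · d_{n-j}, where d_m denotes the number of derangements of an m-element set (permutations with no fixed points). -/
/-!
A permutation whose fixed-point set is exactly `F` is a derangement of `Fᶜ`, so there are
`d_{n - #F}` of them. The permutations deranging `{1,…,n-ℓ}` are those whose fixed-point set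
lies in the remaining `ℓ` points; grouping the `C(ℓ,j)` possible fixed-point sets by their
size `j` gives the sum.
-/

open Equiv Finset

namespace Equiv.Perm

variable {α : Type*} [Fintype α] [DecidableEq α]

theorem card_filter_support_eq (T : Finset α) :
    #{σ : Perm α | σ.support = T} = numDerangements #T := by
  have e : derangements T ≃ {σ : Perm α // σ.support = T} :=
    (derangements.subtypeEquiv (· ∈ T)).trans <| subtypeEquivRight fun σ => by
      simp only [Finset.ext_iff, mem_support, Function.mem_fixedPoints, Function.IsFixedPt]
      exact forall_congr' fun a => by rw [iff_comm, not_iff_comm]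
  rw [← Fintype.card_subtype, ← Fintype.card_congr e, card_derangements_eq_numDerangements,
    Fintype.card_coe]

theorem card_filter_subset_support (S : Finset α) :
    #{σ : Perm α | S ⊆ σ.support} =
      ∑ j ∈ range (#Sᶜ + 1), (#Sᶜ).choose j * numDerangements (Fintype.card α - j) := by
  have fixed_subset : ∀ σ ∈ ({σ : Perm α | S ⊆ σ.support} : Finset _),
      σ.supportᶜ ∈ Sᶜ.powerset := fun σ hσ => by
    simpa [compl_subset_compl] using hσ
  rw [card_eq_sum_card_fiberwise fixed_subset]
  calc ∑ F ∈ Sᶜ.powerset, #{σ ∈ ({σ : Perm α | S ⊆ σ.support} : Finset _) | σ.supportᶜ = F}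
      = ∑ F ∈ Sᶜ.powerset, numDerangements (Fintype.card α - #F) := by
        refine sum_congr rfl fun F hF => ?_
        rw [← card_compl, ← card_filter_support_eq]
        congr 1
        ext σ
        simp only [mem_filter, mem_univ, true_and, compl_eq_comm]
        constructor
        · exact fun h => h.2.symm
        · intro hσ
          refine ⟨?_, hσ.symm⟩
          simpa [hσ, subset_compl_comm] using mem_powerset.1 hF
    _ = _ := by
        rw [sum_powerset_apply_card (fun m => numDerangements (Fintype.card α - m))]
        simp only [smul_eq_mul]

end Equiv.Perm

/-- The number of permutations of `{1,…,n}` deranging the first `n-ℓ` points equals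
`Σ_{j=0}^{ℓ} C(ℓ,j) · d_{n-j}`, where `d_m` is the number of derangements of an
`m`-element set. -/
theorem stmt19 (n ℓ : ℕ) (h : ℓ ≤ n) :
    Nat.card {σ : Equiv.Perm (Fin n) // ∀ i : Fin n, (i : ℕ) < n - ℓ → σ i ≠ i} =
      ∑ j ∈ Finset.range (ℓ + 1), ℓ.choose j * numDerangements (n - j) := by
  have hS : #({i : Fin n | (i : ℕ) < n - ℓ} : Finset _)ᶜ = ℓ := by
    rw [card_compl, Fin.card_filter_val_lt, Fintype.card_fin]
    omega
  have count := Perm.card_filter_subset_support ({i : Fin n | (i : ℕ) < n - ℓ} : Finset _)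
  rw [hS, Fintype.card_fin] at count
  rw [Nat.card_eq_fintype_card, Fintype.card_subtype, ← count]
  congr 1
  ext σ
  simp [subset_iff, Perm.mem_support]
end
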